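/- arXiv:2110.03203 — 6 statements merged into one kernel-verified Lean document; each statement's English description precedes it below -/
import Mathlib

section
/- For a ∈ (0,1), the improper integral ∫₀^∞ t^{a−1} cos t dt converges and equals Γ(a) cos(πa/2). -/
open Real Filter

/-!
Since `Γ(1-a) t^(a-1) = ∫₀^∞ x^(-a) e^(-tx) dx`, Fubini gives
`Γ(1-a) ∫₀^T t^(a-1) cos t dt = ∫₀^∞ x^(-a) F_T(x) dx` with `F_T(x) = ∫₀^T e^(-xt) cos t dt`.
The explicit primitive of `e^(-xt) cos t` shows `|F_T(x)| ≤ (1+2x)/(1+x²)` and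
`F_T(x) → x/(1+x²)`, so by dominated convergence the limit is `∫₀^∞ x^(1-a)/(1+x²) dx`.
Writing `1/(1+x²) = ∫₀^∞ e^(-(1+x²)u) du` and swapping once more, this integral is a product of a
Gaussian moment and a Gamma integral, namely `Γ(1-a/2) Γ(a/2) / 2 = π / (2 sin(πa/2))`; the
reflection formula for `Γ(a) Γ(1-a)` turns this into `Γ(1-a) Γ(a) cos(πa/2)`.
-/

open MeasureTheory Set Topology Asymptotics

lemma integral_rpow_neg_mul_exp_neg_mul {a t : ℝ} (ha : a < 1) (ht : 0 < t) :
    ∫ x in Ioi (0:ℝ), x ^ (-a) * exp (-(t * x)) = Gamma (1 - a) * t ^ (a - 1) := by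
  have h := integral_rpow_mul_exp_neg_mul_Ioi (a := 1 - a) (sub_pos.2 ha) ht
  rw [sub_sub_cancel_left, one_div, inv_rpow ht.le, ← rpow_neg ht.le, neg_sub] at h
  rw [h, mul_comm]

lemma integrableOn_rpow_neg_mul_exp_neg_mul {a t : ℝ} (ha : a < 1) (ht : 0 < t) :
    IntegrableOn (fun x : ℝ => x ^ (-a) * exp (-(t * x))) (Ioi 0) :=
  .of_integral_ne_zero <| by
    rw [integral_rpow_neg_mul_exp_neg_mul ha ht]
    exact (mul_pos (Gamma_pos_of_pos (sub_pos.2 ha)) (rpow_pos_of_pos ht _)).ne'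

section Laplace

variable {a : ℝ} {s : Set ℝ} {f : ℝ → ℝ}

lemma integrable_prod_laplace_kernel (ha : a < 1) (hs : MeasurableSet s) (hs0 : s ⊆ Ioi 0)
    (hf : Measurable f) (hfi : IntegrableOn (fun t => t ^ (a - 1) * f t) s) :
    Integrable (Function.uncurry fun t x : ℝ => f t * (x ^ (-a) * exp (-(t * x))))
      ((volume.restrict s).prod (volume.restrict (Ioi 0))) := by
  have hmeas : AEStronglyMeasurable
      (Function.uncurry fun t x : ℝ => f t * (x ^ (-a) * exp (-(t * x))))
      ((volume.restrict s).prod (volume.restrict (Ioi 0))) := by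
    apply Measurable.aestronglyMeasurable
    unfold Function.uncurry
    fun_prop
  refine (integrable_prod_iff hmeas).2 ⟨?_, ?_⟩
  · filter_upwards [ae_restrict_mem hs] with t ht
    exact (integrableOn_rpow_neg_mul_exp_neg_mul ha (hs0 ht)).const_mul (f t)
  · refine (hfi.norm.const_mul (Gamma (1 - a))).congr ?_
    filter_upwards [ae_restrict_mem hs] with t ht
    have ht0 : 0 < t := hs0 ht
    calc Gamma (1 - a) * ‖t ^ (a - 1) * f t‖
        = ‖f t‖ * ∫ x in Ioi 0, x ^ (-a) * exp (-(t * x)) := by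
          rw [integral_rpow_neg_mul_exp_neg_mul ha ht0, norm_mul,
            norm_of_nonneg (rpow_nonneg ht0.le _)]
          ring
      _ = _ := by
          rw [← integral_const_mul]
          refine setIntegral_congr_fun measurableSet_Ioi fun x hx => ?_
          rw [Function.uncurry_apply_pair, norm_mul,
            norm_of_nonneg (mul_nonneg (rpow_nonneg (le_of_lt hx) _) (exp_pos _).le)]

theorem gamma_mul_setIntegral_rpow_mul (ha : a < 1) (hs : MeasurableSet s) (hs0 : s ⊆ Ioi 0)
    (hf : Measurable f) (hfi : IntegrableOn (fun t => t ^ (a - 1) * f t) s) :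
    Gamma (1 - a) * ∫ t in s, t ^ (a - 1) * f t =
      ∫ x in Ioi 0, x ^ (-a) * ∫ t in s, exp (-(x * t)) * f t := by
  calc Gamma (1 - a) * ∫ t in s, t ^ (a - 1) * f t
      = ∫ t in s, ∫ x in Ioi 0, f t * (x ^ (-a) * exp (-(t * x))) := by
        rw [← integral_const_mul]
        refine setIntegral_congr_fun hs fun t ht => ?_
        rw [integral_const_mul, integral_rpow_neg_mul_exp_neg_mul ha (hs0 ht)]
        ring
    _ = ∫ x in Ioi 0, ∫ t in s, f t * (x ^ (-a) * exp (-(t * x))) :=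
        integral_integral_swap (integrable_prod_laplace_kernel ha hs hs0 hf hfi)
    _ = ∫ x in Ioi 0, x ^ (-a) * ∫ t in s, exp (-(x * t)) * f t := by
        refine setIntegral_congr_fun measurableSet_Ioi fun x _ => ?_
        rw [← integral_const_mul]
        refine integral_congr_ae (ae_of_all _ fun t => ?_)
        simp only [mul_comm x t]
        ring

end Laplace

theorem integral_exp_neg_mul_mul_cos (x T : ℝ) :
    ∫ t in (0:ℝ)..T, exp (-(x * t)) * cos t =
      (x + exp (-(x * T)) * (sin T - x * cos T)) / (1 + x ^ 2) := by
  have hderiv : ∀ t, HasDerivAt (fun t => exp (-(x * t)) * (sin t - x * cos t) / (1 + x ^ 2))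
      (exp (-(x * t)) * cos t) t := by
    intro t
    have h := ((((hasDerivAt_id' t).const_mul x).fun_neg.exp).fun_mul
      ((hasDerivAt_sin t).fun_sub ((hasDerivAt_cos t).const_mul x))).div_const (1 + x ^ 2)
    refine h.congr_deriv ?_
    field_simp
    ring
  rw [intervalIntegral.integral_eq_sub_of_hasDerivAt (fun t _ => hderiv t)
    (by apply Continuous.intervalIntegrable; fun_prop)]
  simp only [mul_zero, neg_zero, exp_zero, sin_zero, cos_zero]
  ring

lemma abs_sin_sub_mul_cos_le {x : ℝ} (hx : 0 ≤ x) (T : ℝ) : |sin T - x * cos T| ≤ 1 + x :=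
  calc |sin T - x * cos T| ≤ |sin T| + x * |cos T| := by
        simpa only [abs_mul, abs_of_nonneg hx] using abs_sub (sin T) (x * cos T)
    _ ≤ 1 + x * 1 := by gcongr; exacts [abs_sin_le_one T, abs_cos_le_one T]
    _ = 1 + x := by ring

lemma abs_integral_exp_neg_mul_mul_cos_le {x T : ℝ} (hx : 0 ≤ x) (hT : 0 ≤ T) :
    |∫ t in (0:ℝ)..T, exp (-(x * t)) * cos t| ≤ (1 + 2 * x) / (1 + x ^ 2) := by
  rw [integral_exp_neg_mul_mul_cos, abs_div, abs_of_pos (by positivity : (0:ℝ) < 1 + x ^ 2)]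
  gcongr
  have hexp : exp (-(x * T)) ≤ 1 := exp_le_one_iff.2 (by nlinarith)
  have hsc := abs_sin_sub_mul_cos_le hx T
  calc |x + exp (-(x * T)) * (sin T - x * cos T)|
      ≤ |x| + |exp (-(x * T)) * (sin T - x * cos T)| := abs_add_le _ _
    _ = x + exp (-(x * T)) * |sin T - x * cos T| := by
        rw [abs_of_nonneg hx, abs_mul, abs_of_pos (exp_pos _)]
    _ ≤ x + 1 * (1 + x) := by gcongr
    _ = 1 + 2 * x := by ring

lemma tendsto_integral_exp_neg_mul_mul_cos {x : ℝ} (hx : 0 < x) :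
    Tendsto (fun T => ∫ t in (0:ℝ)..T, exp (-(x * t)) * cos t) atTop (𝓝 (x / (1 + x ^ 2))) := by
  simp_rw [integral_exp_neg_mul_mul_cos]
  have hexp : Tendsto (fun T => exp (-(x * T))) atTop (𝓝 0) :=
    tendsto_exp_atBot.comp (tendsto_neg_atTop_atBot.comp (tendsto_id.const_mul_atTop hx))
  have hbdd : IsBoundedUnder (· ≤ ·) atTop (fun T => ‖sin T - x * cos T‖) :=
    isBoundedUnder_of ⟨1 + x, fun T => abs_sin_sub_mul_cos_le hx.le T⟩
  simpa using ((hexp.zero_mul_isBoundedUnder_le hbdd).const_add x).div_const (1 + x ^ 2)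

lemma integrableOn_rpow_mul_of_isBigO_rpow {f : ℝ → ℝ} (hf : Continuous f) {p s : ℝ}
    (hfp : f =O[atTop] (· ^ (-p))) (hs : 0 < s) (hsp : s < p) :
    IntegrableOn (fun x : ℝ => x ^ (s - 1) * f x) (Ioi 0) := by
  refine mellin_convergent_of_isBigO_scalar (hf.locallyIntegrable.locallyIntegrableOn _) hfp hsp
    ?_ hs
  simpa only [neg_zero, rpow_zero] using
    ((hf.tendsto 0).mono_left nhdsWithin_le_nhds).isBigO_one ℝ

lemma inv_one_add_sq_isBigO : (fun x : ℝ => (1 + x ^ 2)⁻¹) =O[atTop] (· ^ (-2 : ℝ)) := by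
  refine IsBigO.of_bound 1 ?_
  filter_upwards [eventually_gt_atTop 0] with x hx
  rw [rpow_neg hx.le, rpow_two, one_mul, norm_inv, norm_inv, norm_of_nonneg (by positivity),
    norm_of_nonneg (by positivity)]
  gcongr
  linarith

lemma one_add_two_mul_div_one_add_sq_isBigO :
    (fun x : ℝ => (1 + 2 * x) / (1 + x ^ 2)) =O[atTop] (· ^ (-1 : ℝ)) := by
  refine IsBigO.of_bound 3 ?_
  filter_upwards [eventually_ge_atTop 1] with x hx
  have hx0 : 0 < x := by linarith
  rw [rpow_neg_one, norm_of_nonneg (by positivity), norm_of_nonneg (by positivity),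
    div_le_iff₀ (by positivity)]
  field_simp
  nlinarith

lemma integral_rpow_mul_exp_neg_mul_sq {s t : ℝ} (hs : 0 < s) (ht : 0 < t) :
    ∫ x in Ioi (0:ℝ), x ^ (s - 1) * exp (-(t * x ^ 2)) = Gamma (s / 2) / 2 * t ^ (-(s / 2)) := by
  have h := integral_rpow_mul_exp_neg_mul_rpow (p := 2) (q := s - 1) two_pos (by linarith) ht
  rw [sub_add_cancel, neg_div] at h
  rw [show Gamma (s / 2) / 2 * t ^ (-(s / 2)) = t ^ (-(s / 2)) * (1 / 2) * Gamma (s / 2) by ring,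
    ← h]
  refine setIntegral_congr_fun measurableSet_Ioi fun x _ => ?_
  norm_num [neg_mul]

lemma integral_exp_neg_mul_Ioi {c : ℝ} (hc : 0 < c) :
    ∫ t in Ioi (0:ℝ), exp (-(c * t)) = c⁻¹ := by
  have h := integral_exp_mul_Ioi (neg_lt_zero.2 hc) 0
  simp only [mul_zero, exp_zero, neg_mul] at h
  rw [h, div_neg, neg_div, neg_neg, one_div]

lemma integrable_prod_rpow_mul_exp_neg_mul_one_add_sq {s : ℝ} (hs0 : 0 < s) (hs2 : s < 2) :
    Integrable (Function.uncurry fun x t : ℝ => x ^ (s - 1) * exp (-((1 + x ^ 2) * t)))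
      ((volume.restrict (Ioi 0)).prod (volume.restrict (Ioi 0))) := by
  have hmeas : AEStronglyMeasurable
      (Function.uncurry fun x t : ℝ => x ^ (s - 1) * exp (-((1 + x ^ 2) * t)))
      ((volume.restrict (Ioi 0)).prod (volume.restrict (Ioi 0))) := by
    apply Measurable.aestronglyMeasurable
    unfold Function.uncurry
    fun_prop
  refine (integrable_prod_iff hmeas).2 ⟨ae_of_all _ fun x => ?_, ?_⟩
  · simp only [Function.uncurry_apply_pair, ← neg_mul]
    exact (exp_neg_integrableOn_Ioi 0 (by positivity)).const_mul _
  · refine (integrableOn_rpow_mul_of_isBigO_rpow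
      ((by fun_prop : Continuous fun x : ℝ => 1 + x ^ 2).inv₀ fun x => by positivity)
      inv_one_add_sq_isBigO hs0 hs2).congr ?_
    filter_upwards [ae_restrict_mem measurableSet_Ioi] with x hx
    rw [Pi.inv_apply, ← integral_exp_neg_mul_Ioi (by positivity : (0:ℝ) < 1 + x ^ 2),
      ← integral_const_mul]
    refine setIntegral_congr_fun measurableSet_Ioi fun t _ => ?_
    rw [Function.uncurry_apply_pair, norm_of_nonneg (mul_nonneg (rpow_nonneg (le_of_lt hx) _)
      (exp_pos _).le)]

theorem integral_rpow_div_one_add_sq {s : ℝ} (hs0 : 0 < s) (hs2 : s < 2) :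
    ∫ x in Ioi (0:ℝ), x ^ (s - 1) / (1 + x ^ 2) = π / (2 * sin (π * s / 2)) := by
  calc ∫ x in Ioi (0:ℝ), x ^ (s - 1) / (1 + x ^ 2)
      = ∫ x in Ioi (0:ℝ), ∫ t in Ioi (0:ℝ), x ^ (s - 1) * exp (-((1 + x ^ 2) * t)) := by
        refine setIntegral_congr_fun measurableSet_Ioi fun x _ => ?_
        rw [integral_const_mul, integral_exp_neg_mul_Ioi (by positivity), div_eq_mul_inv]
    _ = ∫ t in Ioi (0:ℝ), ∫ x in Ioi (0:ℝ), x ^ (s - 1) * exp (-((1 + x ^ 2) * t)) :=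
        integral_integral_swap (integrable_prod_rpow_mul_exp_neg_mul_one_add_sq hs0 hs2)
    _ = ∫ t in Ioi (0:ℝ), Gamma (s / 2) / 2 * (exp (-t) * t ^ ((1 - s / 2) - 1)) := by
        refine setIntegral_congr_fun measurableSet_Ioi fun t ht => ?_
        have hsplit : ∀ x : ℝ, x ^ (s - 1) * exp (-((1 + x ^ 2) * t)) =
            exp (-t) * (x ^ (s - 1) * exp (-(t * x ^ 2))) := fun x => by
          rw [← mul_left_comm, ← exp_add]; ring_nf
        simp_rw [hsplit]
        rw [integral_const_mul, integral_rpow_mul_exp_neg_mul_sq hs0 ht, sub_sub_cancel_left]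
        ring
    _ = Gamma (s / 2) * Gamma (1 - s / 2) / 2 := by
        rw [integral_const_mul, ← Gamma_eq_integral (by linarith)]
        ring
    _ = π / (2 * sin (π * s / 2)) := by
        rw [Gamma_mul_Gamma_one_sub, mul_div_assoc, div_div, mul_comm (sin _)]

lemma gamma_mul_intervalIntegral_rpow_mul_cos {a T : ℝ} (ha0 : 0 < a) (ha1 : a < 1)
    (hT : 0 ≤ T) :
    Gamma (1 - a) * ∫ t in (0:ℝ)..T, t ^ (a - 1) * cos t =
      ∫ x in Ioi 0, x ^ (-a) * ∫ t in (0:ℝ)..T, exp (-(x * t)) * cos t := by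
  have hi : IntervalIntegrable (fun t => t ^ (a - 1) * cos t) volume 0 T :=
    (intervalIntegral.intervalIntegrable_rpow' (by linarith)).mul_continuousOn
      continuous_cos.continuousOn
  simp only [intervalIntegral.integral_of_le hT]
  exact gamma_mul_setIntegral_rpow_mul ha1 measurableSet_Ioc (fun t ht => ht.1)
    continuous_cos.measurable ((intervalIntegrable_iff_integrableOn_Ioc_of_le hT).1 hi)

lemma tendsto_integral_rpow_neg_mul_integral_exp_neg_mul_mul_cos {a : ℝ} (ha0 : 0 < a)
    (ha1 : a < 1) :
    Tendsto (fun T => ∫ x in Ioi 0, x ^ (-a) * ∫ t in (0:ℝ)..T, exp (-(x * t)) * cos t) atTop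
      (𝓝 (∫ x in Ioi (0:ℝ), x ^ ((2 - a) - 1) / (1 + x ^ 2))) := by
  have hbound : IntegrableOn (fun x : ℝ => x ^ (-a) * ((1 + 2 * x) / (1 + x ^ 2))) (Ioi 0) := by
    simpa only [sub_sub_cancel_left] using integrableOn_rpow_mul_of_isBigO_rpow
      (by fun_prop (disch := intro x; positivity)) one_add_two_mul_div_one_add_sq_isBigO
      (sub_pos.2 ha1) (by linarith : 1 - a < 1)
  refine tendsto_integral_filter_of_dominated_convergence _ ?_ ?_ hbound ?_
  · refine Eventually.of_forall fun T => Measurable.aestronglyMeasurable ?_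
    simp_rw [integral_exp_neg_mul_mul_cos]
    fun_prop
  · filter_upwards [eventually_ge_atTop 0] with T hT
    filter_upwards [ae_restrict_mem measurableSet_Ioi] with x hx
    rw [norm_mul, norm_of_nonneg (rpow_nonneg (le_of_lt hx) _)]
    exact mul_le_mul_of_nonneg_left (abs_integral_exp_neg_mul_mul_cos_le (le_of_lt hx) hT)
      (rpow_nonneg (le_of_lt hx) _)
  · filter_upwards [ae_restrict_mem measurableSet_Ioi] with x hx
    have hx0 : 0 < x := hx
    convert (tendsto_integral_exp_neg_mul_mul_cos hx0).const_mul (x ^ (-a)) using 2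
    rw [mul_div_assoc', ← rpow_add_one hx0.ne', sub_sub, add_comm a 1, ← sub_sub,
      show (2:ℝ) - 1 = 1 by norm_num, sub_eq_neg_add]

lemma gamma_one_sub_mul_gamma_mul_cos {a : ℝ} (ha0 : 0 < a) (ha1 : a < 1) :
    Gamma (1 - a) * (Gamma a * cos (π * a / 2)) = π / (2 * sin (π * (2 - a) / 2)) := by
  have hsin : sin (π * (2 - a) / 2) = sin (π * a / 2) := by
    rw [show π * (2 - a) / 2 = π - π * a / 2 by ring, sin_pi_sub]
  have hsin_pos : 0 < sin (π * a / 2) :=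
    sin_pos_of_pos_of_lt_pi (by positivity) (by nlinarith [pi_pos])
  have hcos_pos : 0 < cos (π * a / 2) :=
    cos_pos_of_mem_Ioo ⟨by nlinarith [pi_pos], by nlinarith [pi_pos]⟩
  have hdouble : sin (π * a) = 2 * sin (π * a / 2) * cos (π * a / 2) := by
    rw [← sin_two_mul]; ring_nf
  rw [hsin, mul_left_comm, ← mul_assoc, Gamma_mul_Gamma_one_sub, hdouble]
  field_simp

theorem stmt_2 (a : ℝ) (ha : a ∈ Set.Ioo (0:ℝ) 1) :
    Filter.Tendsto (fun T : ℝ => ∫ t in (0:ℝ)..T, t ^ (a - 1) * Real.cos t)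
      Filter.atTop (nhds (Real.Gamma a * Real.cos (Real.pi * a / 2))) := by
  obtain ⟨ha0, ha1⟩ := ha
  have hΓ : Gamma (1 - a) ≠ 0 := (Gamma_pos_of_pos (sub_pos.2 ha1)).ne'
  have hlim := tendsto_integral_rpow_neg_mul_integral_exp_neg_mul_mul_cos ha0 ha1
  rw [integral_rpow_div_one_add_sq (by linarith) (by linarith),
    ← gamma_one_sub_mul_gamma_mul_cos ha0 ha1] at hlim
  have hrep : (fun T => ∫ x in Ioi 0, x ^ (-a) * ∫ t in (0:ℝ)..T, exp (-(x * t)) * cos t)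
      =ᶠ[atTop] fun T => Gamma (1 - a) * ∫ t in (0:ℝ)..T, t ^ (a - 1) * cos t := by
    filter_upwards [eventually_ge_atTop 0] with T hT
    exact (gamma_mul_intervalIntegral_rpow_mul_cos ha0 ha1 hT).symm
  simpa [hΓ] using (hlim.congr' hrep).const_mul (Gamma (1 - a))⁻¹
end

section
/- For a ∈ (0,1), there exists C > 0 such that for all ω ≥ 1, |∫₀¹ x^{a−1} cos(ωx) dx − Γ(a) cos(πa/2)/ω^a − sin(ω)/ω| ≤ C/ω². -/
/-!
Write `k_b(z, t) = t ^ b e^{-zt}` (`rpowMulCexp b z t`). For real `z > 0` the substitution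
`u = zt` gives `∫_0^∞ k_{a-1}(z, ·) = Γ(a) z^{-a}`, and both sides are holomorphic on
`Re z > 0`, so the identity holds on the whole right half-plane. Splitting the integral at `1`
and integrating by parts on `(1, ∞)` rewrites it as
`Γ(a) z^{-a} = ∫_0^1 k_{a-1}(z, ·) + (e^{-z} + (a - 1) ∫_1^∞ k_{a-2}(z, ·)) / z`,
in which every term is continuous up to the imaginary axis (for `a < 1`), so it survives at
`z = iω`. Taking real parts gives the claimed expansion, the remainder being
`(a - 1) ∫_1^∞ k_{a-2}(iω, ·) / (iω)`; one more integration by parts shows that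
`‖z ∫_1^∞ k_{a-2}(z, ·)‖ ≤ 2`, so the remainder is `O(ω⁻²)`.
-/

open Real

open MeasureTheory Set Filter Topology Complex

noncomputable def rpowMulCexp (b : ℝ) (z : ℂ) (t : ℝ) : ℂ :=
  ((t ^ b : ℝ) : ℂ) * cexp (-(z * t))

section Integrability

variable {b : ℝ} {z : ℂ} {s : Set ℝ}

lemma norm_rpowMulCexp {t : ℝ} (ht : 0 < t) :
    ‖rpowMulCexp b z t‖ = t ^ b * Real.exp (-(z.re * t)) := by
  simp [rpowMulCexp, norm_exp, abs_of_nonneg (rpow_nonneg ht.le b)]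

lemma norm_rpowMulCexp_le {t : ℝ} (ht : 0 < t) (hz : 0 ≤ z.re) :
    ‖rpowMulCexp b z t‖ ≤ t ^ b := by
  rw [norm_rpowMulCexp ht]
  exact mul_le_of_le_one_right (rpow_nonneg ht.le b) (Real.exp_le_one_iff.mpr (by nlinarith))

lemma continuousOn_rpowMulCexp : ContinuousOn (rpowMulCexp b z) (Ioi 0) :=
  (continuous_ofReal.comp_continuousOn
    (continuousOn_id.rpow_const fun _ ht => Or.inl (ne_of_gt ht))).mul (by fun_prop)

lemma integrableOn_Ioi_zero_rpowMulCexp (hb : -1 < b) (hz : 0 < z.re) :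
    IntegrableOn (rpowMulCexp b z) (Ioi 0) := by
  refine Integrable.mono' ?_ (continuousOn_rpowMulCexp.aestronglyMeasurable measurableSet_Ioi)
    (ae_restrict_of_forall_mem measurableSet_Ioi fun _ ht => (norm_rpowMulCexp ht).le)
  simpa using (integrableOn_rpow_mul_exp_neg_mul_rpow hb one_pos hz).integrable

lemma integrableOn_rpowMulCexp_of_re_nonneg (hs : s ⊆ Ioi 0) (hsm : MeasurableSet s)
    (h : IntegrableOn (fun t : ℝ => t ^ b) s) (hz : 0 ≤ z.re) :
    IntegrableOn (rpowMulCexp b z) s :=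
  h.mono' ((continuousOn_rpowMulCexp.mono hs).aestronglyMeasurable hsm)
    (ae_restrict_of_forall_mem hsm fun _ ht => norm_rpowMulCexp_le (hs ht) hz)

lemma integrableOn_Ioi_one_rpowMulCexp (hb : b < -1) (hz : 0 ≤ z.re) :
    IntegrableOn (rpowMulCexp b z) (Ioi 1) :=
  integrableOn_rpowMulCexp_of_re_nonneg (Ioi_subset_Ioi zero_le_one) measurableSet_Ioi
    (integrableOn_Ioi_rpow_of_lt hb one_pos) hz

lemma integrableOn_Ioc_zero_one_rpow (hb : -1 < b) :
    IntegrableOn (fun t : ℝ => t ^ b) (Ioc 0 1) :=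
  (integrableOn_Ioc_iff_integrableOn_Ioo).mpr
    ((intervalIntegral.integrableOn_Ioo_rpow_iff one_pos).mpr hb)

lemma continuousOn_setIntegral_rpowMulCexp (hs : s ⊆ Ioi 0) (hsm : MeasurableSet s)
    (h : IntegrableOn (fun t : ℝ => t ^ b) s) :
    ContinuousOn (fun w => ∫ t in s, rpowMulCexp b w t) {w | 0 ≤ w.re} :=
  continuousOn_of_dominated
    (fun _ _ => (continuousOn_rpowMulCexp.mono hs).aestronglyMeasurable hsm)
    (fun _ hw => ae_restrict_of_forall_mem hsm fun _ ht => norm_rpowMulCexp_le (hs ht) hw) h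
    (ae_of_all _ fun _ => by unfold rpowMulCexp; fun_prop)

end Integrability

section GammaIntegral

variable {b : ℝ} {z : ℂ}

lemma hasDerivAt_rpowMulCexp_param (t : ℝ) :
    HasDerivAt (fun w => rpowMulCexp b w t) (-t * rpowMulCexp b z t) z := by
  have h : HasDerivAt (fun w : ℂ => -(w * t)) (-t) z := by
    simpa using (hasDerivAt_mul_const (t : ℂ)).fun_neg
  exact (h.cexp.const_mul _).congr_deriv (by simp only [rpowMulCexp]; ring)

lemma differentiableAt_setIntegral_Ioi_zero_rpowMulCexp (hb : -1 < b) (hz : 0 < z.re) :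
    DifferentiableAt ℂ (fun w => ∫ t in Ioi 0, rpowMulCexp b w t) z := by
  have hδ : 0 < z.re / 2 := by positivity
  refine (hasDerivAt_integral_of_dominated_loc_of_deriv_le (Metric.ball_mem_nhds z hδ)
    (F := fun w t => rpowMulCexp b w t) (F' := fun w t => -t * rpowMulCexp b w t)
    (bound := fun t => t ^ (b + 1) * Real.exp (-(z.re / 2 * t)))
    (Eventually.of_forall fun _ => continuousOn_rpowMulCexp.aestronglyMeasurable measurableSet_Ioi)
    (integrableOn_Ioi_zero_rpowMulCexp hb hz)
    ((continuous_ofReal.neg.continuousOn.mul continuousOn_rpowMulCexp).aestronglyMeasurable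
      measurableSet_Ioi) ?_
    (by simpa using
      (integrableOn_rpow_mul_exp_neg_mul_rpow (by linarith : -1 < b + 1) one_pos hδ).integrable)
    (ae_of_all _ fun t w _ => hasDerivAt_rpowMulCexp_param (z := w) t)).2.differentiableAt
  refine ae_restrict_of_forall_mem measurableSet_Ioi fun t (ht : 0 < t) w hw => ?_
  have hw : z.re / 2 ≤ w.re := by
    have := (abs_re_le_norm (w - z)).trans (mem_ball_iff_norm.mp hw).le
    rw [sub_re, abs_le] at this
    linarith
  rw [norm_mul, norm_rpowMulCexp ht, norm_neg, norm_real, Real.norm_of_nonneg ht.le,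
    rpow_add_one ht.ne', ← mul_assoc, mul_comm t]
  gcongr

lemma setIntegral_Ioi_zero_rpowMulCexp_ofReal {a r : ℝ} (ha : 0 < a) (hr : 0 < r) :
    ∫ t in Ioi 0, rpowMulCexp (a - 1) r t = Real.Gamma a * (r : ℂ) ^ (-(a : ℂ)) := by
  have key := integral_cpow_mul_exp_neg_mul_Ioi (a := (a : ℂ)) (by simpa using ha) hr
  rw [← ofReal_one, ← ofReal_div, ← ofReal_cpow (by positivity), Gamma_ofReal, one_div,
    inv_rpow hr.le, ← rpow_neg hr.le, ofReal_cpow hr.le, ofReal_neg, mul_comm] at key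
  refine Eq.trans (setIntegral_congr_fun measurableSet_Ioi fun t (ht : 0 < t) => ?_) key
  simp [rpowMulCexp, ofReal_cpow ht.le]

lemma setIntegral_Ioi_zero_rpowMulCexp {a : ℝ} (ha : 0 < a) (hz : 0 < z.re) :
    ∫ t in Ioi 0, rpowMulCexp (a - 1) z t = Real.Gamma a * z ^ (-(a : ℂ)) := by
  have hU : IsOpen {w : ℂ | 0 < w.re} := isOpen_lt continuous_const continuous_re
  refine AnalyticOnNhd.eqOn_of_preconnected_of_frequently_eq (𝕜 := ℂ) (z₀ := 1)
    (f := fun w => ∫ t in Ioi 0, rpowMulCexp (a - 1) w t)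
    (g := fun w => Real.Gamma a * w ^ (-(a : ℂ))) ?_ ?_
    (convex_halfSpace_re_gt 0).isPreconnected (by simp) ?_ hz
  · exact DifferentiableOn.analyticOnNhd (fun w hw =>
      (differentiableAt_setIntegral_Ioi_zero_rpowMulCexp (by linarith) hw).differentiableWithinAt)
      hU
  · exact DifferentiableOn.analyticOnNhd (fun w hw =>
      ((differentiableAt_id.cpow_const (Or.inl hw)).const_mul _).differentiableWithinAt) hU
  · have hreal : Tendsto ((↑) : ℝ → ℂ) (𝓝[>] 1) (𝓝[≠] 1) :=
      tendsto_nhdsWithin_of_tendsto_nhds_of_eventually_within _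
        (continuous_ofReal.tendsto' 1 1 ofReal_one |>.mono_left nhdsWithin_le_nhds)
        (eventually_nhdsWithin_of_forall fun r (hr : 1 < r) => by simpa using hr.ne')
    exact hreal.frequently (Eventually.frequently (eventually_nhdsWithin_of_forall
      fun r (hr : 1 < r) => setIntegral_Ioi_zero_rpowMulCexp_ofReal ha (by linarith)))

end GammaIntegral

section Tail

variable {b : ℝ} {z : ℂ}

lemma hasDerivAt_rpowMulCexp {t : ℝ} (ht : 0 < t) :
    HasDerivAt (rpowMulCexp b z) (b * rpowMulCexp (b - 1) z t - z * rpowMulCexp b z t) t := by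
  have h : HasDerivAt (fun u : ℝ => -(z * u)) (-z) t := by
    simpa using ((hasDerivAt_id (t : ℂ)).const_mul z).comp_ofReal.fun_neg
  refine ((hasDerivAt_rpow_const (Or.inl ht.ne')).ofReal_comp.mul h.cexp).congr_deriv ?_
  simp only [rpowMulCexp]
  push_cast
  ring

lemma mul_setIntegral_Ioi_one_rpowMulCexp (hb : b < 0) (hz : 0 ≤ z.re)
    (hint : IntegrableOn (rpowMulCexp b z) (Ioi 1)) :
    z * ∫ t in Ioi 1, rpowMulCexp b z t =
      cexp (-z) + b * ∫ t in Ioi 1, rpowMulCexp (b - 1) z t := by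
  have hint' := integrableOn_Ioi_one_rpowMulCexp (b := b - 1) (by linarith) hz
  have hlim : Tendsto (rpowMulCexp b z) atTop (𝓝 0) :=
    squeeze_zero_norm' (eventually_gt_atTop 0 |>.mono fun t ht => norm_rpowMulCexp_le ht hz)
      (by simpa using tendsto_rpow_neg_atTop (neg_pos.mpr hb))
  have ftc := integral_Ioi_of_hasDerivAt_of_tendsto'
    (fun t ht => hasDerivAt_rpowMulCexp (one_pos.trans_le ht))
    ((hint'.const_mul _).sub (hint.const_mul _)) hlim
  have h1 : rpowMulCexp b z 1 = cexp (-z) := by simp [rpowMulCexp]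
  rw [integral_sub (hint'.const_mul _) (hint.const_mul _), integral_const_mul, integral_const_mul,
    h1] at ftc
  linear_combination -ftc

lemma norm_setIntegral_Ioi_one_rpowMulCexp_le (hb : b < -1) (hz : 0 ≤ z.re) :
    ‖∫ t in Ioi 1, rpowMulCexp b z t‖ ≤ -1 / (b + 1) :=
  calc ‖∫ t in Ioi 1, rpowMulCexp b z t‖ ≤ ∫ t in Ioi 1, t ^ b :=
        norm_integral_le_of_norm_le (integrableOn_Ioi_rpow_of_lt hb one_pos)
          (ae_restrict_of_forall_mem measurableSet_Ioi fun t (ht : 1 < t) =>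
            norm_rpowMulCexp_le (one_pos.trans ht) hz)
    _ = -1 / (b + 1) := by rw [integral_Ioi_rpow_of_lt hb one_pos, one_rpow]

lemma norm_mul_setIntegral_Ioi_one_rpowMulCexp_le (hb : b < -1) (hz : 0 ≤ z.re) :
    ‖z * ∫ t in Ioi 1, rpowMulCexp b z t‖ ≤ 2 := by
  rw [mul_setIntegral_Ioi_one_rpowMulCexp (by linarith) hz
    (integrableOn_Ioi_one_rpowMulCexp hb hz)]
  have hexp : ‖cexp (-z)‖ ≤ 1 := by
    rw [norm_exp, neg_re, Real.exp_le_one_iff]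
    linarith
  have htail : ‖(b : ℂ) * ∫ t in Ioi 1, rpowMulCexp (b - 1) z t‖ ≤ 1 := by
    rw [norm_mul, norm_real, Real.norm_of_nonpos (by linarith)]
    calc -b * ‖∫ t in Ioi 1, rpowMulCexp (b - 1) z t‖ ≤ -b * (-1 / (b - 1 + 1)) := by
          gcongr
          · linarith
          exact norm_setIntegral_Ioi_one_rpowMulCexp_le (by linarith) hz
      _ = 1 := by rw [sub_add_cancel]; field_simp [show b ≠ 0 by linarith]
  linarith [norm_add_le (cexp (-z)) ((b : ℂ) * ∫ t in Ioi 1, rpowMulCexp (b - 1) z t)]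

lemma norm_mul_setIntegral_Ioi_one_rpowMulCexp_div_le (hb : b < -1) (hz : 0 ≤ z.re) (c : ℝ) :
    ‖c * (∫ t in Ioi 1, rpowMulCexp b z t) / z‖ ≤ 2 * |c| / ‖z‖ ^ 2 := by
  rcases eq_or_ne z 0 with rfl | hz₀
  · simp
  have h := norm_mul_setIntegral_Ioi_one_rpowMulCexp_le hb hz
  rw [norm_mul] at h
  rw [norm_div, norm_mul, norm_real, Real.norm_eq_abs,
    div_le_div_iff₀ (norm_pos_iff.mpr hz₀) (by positivity)]
  nlinarith [mul_le_mul_of_nonneg_left h (by positivity : 0 ≤ |c| * ‖z‖)]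

end Tail

lemma Gamma_mul_cpow_neg_eq_of_re_pos {a : ℝ} {z : ℂ} (ha : a ∈ Ioo 0 1) (hz : 0 < z.re) :
    Real.Gamma a * z ^ (-(a : ℂ)) = (∫ t in Ioc 0 1, rpowMulCexp (a - 1) z t) +
      (cexp (-z) + (a - 1 : ℝ) * ∫ t in Ioi 1, rpowMulCexp (a - 2) z t) / z := by
  have hint := integrableOn_Ioi_zero_rpowMulCexp (b := a - 1) (by linarith [ha.1]) hz
  have hibp := mul_setIntegral_Ioi_one_rpowMulCexp (by linarith [ha.2]) hz.le
    (hint.mono_set (Ioi_subset_Ioi zero_le_one))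
  rw [show a - 1 - 1 = a - 2 by ring] at hibp
  rw [← setIntegral_Ioi_zero_rpowMulCexp ha.1 hz, ← Ioc_union_Ioi_eq_Ioi zero_le_one,
    setIntegral_union Ioc_disjoint_Ioi_same measurableSet_Ioi
      (hint.mono_set Ioc_subset_Ioi_self) (hint.mono_set (Ioi_subset_Ioi zero_le_one)),
    ← hibp, mul_div_cancel_left₀ _ (fun h => by simp [h] at hz)]

lemma Gamma_mul_cpow_neg_eq {a : ℝ} {z : ℂ} (ha : a ∈ Ioo 0 1) (hz : 0 ≤ z.re)
    (hz₀ : z ≠ 0) :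
    Real.Gamma a * z ^ (-(a : ℂ)) = (∫ t in Ioc 0 1, rpowMulCexp (a - 1) z t) +
      (cexp (-z) + (a - 1 : ℝ) * ∫ t in Ioi 1, rpowMulCexp (a - 2) z t) / z := by
  have hslit : {w : ℂ | 0 ≤ w.re} \ {0} ⊆ slitPlane := fun w ⟨hw, hw₀⟩ =>
    mem_slitPlane_iff.mpr (by
      by_contra! h
      exact hw₀ (ext (le_antisymm h.1 hw) h.2))
  have hP := continuousOn_setIntegral_rpowMulCexp Ioc_subset_Ioi_self measurableSet_Ioc
    (integrableOn_Ioc_zero_one_rpow (b := a - 1) (by linarith [ha.1]))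
  have hJ := continuousOn_setIntegral_rpowMulCexp (b := a - 2) (Ioi_subset_Ioi zero_le_one)
    measurableSet_Ioi (integrableOn_Ioi_rpow_of_lt (by linarith [ha.2]) one_pos)
  refine EqOn.of_subset_closure (s := {w : ℂ | 0 < w.re}) (t := {w : ℂ | 0 ≤ w.re} \ {0})
    (f := fun w : ℂ => Real.Gamma a * w ^ (-(a : ℂ)))
    (g := fun w : ℂ => (∫ t in Ioc 0 1, rpowMulCexp (a - 1) w t) +
      (cexp (-w) + (a - 1 : ℝ) * ∫ t in Ioi 1, rpowMulCexp (a - 2) w t) / w)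
    (fun w (hw : 0 < w.re) => Gamma_mul_cpow_neg_eq_of_re_pos ha hw) ?_ ?_ ?_ ?_ ⟨hz, hz₀⟩
  · exact continuousOn_const.mul (continuousOn_id.cpow_const fun w hw => hslit hw)
  · refine (hP.mono sdiff_subset).add (ContinuousOn.div ?_ continuousOn_id fun w hw => hw.2)
    exact (by fun_prop : Continuous fun w : ℂ => cexp (-w)).continuousOn.add
      (continuousOn_const.mul (hJ.mono sdiff_subset))
  · exact fun w (hw : 0 < w.re) => ⟨hw.le, fun h => by simp [show w = 0 from h] at hw⟩
  · rw [closure_setOfPred_lt_re]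
    exact sdiff_subset

section ImaginaryAxis

variable {ω : ℝ}

lemma re_setIntegral_rpowMulCexp_ofReal_mul_I {b : ℝ} {s : Set ℝ}
    (h : IntegrableOn (rpowMulCexp b (ω * I)) s) :
    (∫ t in s, rpowMulCexp b (ω * I) t).re = ∫ t in s, t ^ b * Real.cos (ω * t) := by
  rw [← RCLike.re_eq_complex_re, ← integral_re h]
  refine integral_congr_ae (ae_of_all _ fun t => ?_)
  dsimp only [rpowMulCexp]
  rw [RCLike.re_eq_complex_re,
    show -((ω : ℂ) * I * t) = (-(ω * t) : ℝ) * I by push_cast; ring, re_ofReal_mul,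
    exp_ofReal_mul_I_re, Real.cos_neg]

lemma ofReal_mul_I_cpow (hω : 0 < ω) (s : ℂ) :
    ((ω : ℂ) * I) ^ s = (ω : ℂ) ^ s * cexp (π / 2 * I * s) := by
  rw [cpow_def_of_ne_zero (by simpa using hω.ne'), log_ofReal_mul hω I_ne_zero, log_I,
    cpow_def_of_ne_zero (by simpa using hω.ne'), ← Complex.exp_add, ofReal_log hω.le]
  ring_nf

lemma re_Gamma_mul_ofReal_mul_I_cpow_neg {a : ℝ} (hω : 0 < ω) :
    (Real.Gamma a * ((ω : ℂ) * I) ^ (-(a : ℂ))).re =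
      Real.Gamma a * Real.cos (π * a / 2) / ω ^ a := by
  rw [ofReal_mul_I_cpow hω, ← ofReal_neg, ← ofReal_cpow hω.le,
    show (π / 2 * I * ((-a : ℝ) : ℂ)) = ((-(π * a / 2) : ℝ) : ℂ) * I by push_cast; ring,
    ← mul_assoc, ← ofReal_mul, re_ofReal_mul, exp_ofReal_mul_I_re, Real.cos_neg,
    rpow_neg hω.le]
  ring

lemma re_cexp_neg_div_ofReal_mul_I (hω : ω ≠ 0) :
    (cexp (-(ω * I)) / (ω * I)).re = -(Real.sin ω / ω) := by
  rw [show -((ω : ℂ) * I) = (-ω : ℝ) * I by push_cast; ring, exp_mul_I]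
  simp only [div_re, normSq_apply, ← ofReal_cos, ← ofReal_sin, ofReal_re, ofReal_im, mul_re,
    mul_im, I_re, I_im, add_re, add_im, Real.sin_neg, Real.cos_neg]
  field_simp
  ring

end ImaginaryAxis

theorem stmt_4 (a : ℝ) (ha : a ∈ Set.Ioo (0:ℝ) 1) :
    ∃ C > (0:ℝ), ∀ ω : ℝ, 1 ≤ ω →
      |(∫ x in (0:ℝ)..1, x ^ (a - 1) * Real.cos (ω * x)) -
        Real.Gamma a * Real.cos (Real.pi * a / 2) / ω ^ a - Real.sin ω / ω| ≤ C / ω ^ 2 := by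
  obtain ⟨ha₀, ha₁⟩ := ha
  refine ⟨2, two_pos, fun ω hω => ?_⟩
  have hω₀ : 0 < ω := one_pos.trans_le hω
  have hw : 0 ≤ ((ω : ℂ) * I).re := by simp
  have hw₀ : (ω : ℂ) * I ≠ 0 := by simpa using hω₀.ne'
  have hre := congrArg re (Gamma_mul_cpow_neg_eq ⟨ha₀, ha₁⟩ hw hw₀)
  rw [re_Gamma_mul_ofReal_mul_I_cpow_neg hω₀, add_re, add_div, add_re,
    re_setIntegral_rpowMulCexp_ofReal_mul_I (integrableOn_rpowMulCexp_of_re_nonneg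
      Ioc_subset_Ioi_self measurableSet_Ioc (integrableOn_Ioc_zero_one_rpow (by linarith)) hw),
    re_cexp_neg_div_ofReal_mul_I hω₀.ne'] at hre
  rw [intervalIntegral.integral_of_le zero_le_one, hre, ← abs_neg]
  refine le_of_eq_of_le (by congr 1; ring) ((abs_re_le_norm _).trans
    ((norm_mul_setIntegral_Ioi_one_rpowMulCexp_div_le (by linarith) hw (a - 1)).trans ?_))
  rw [norm_mul, norm_I, norm_real, Real.norm_of_nonneg hω₀.le, mul_one,
    abs_of_neg (by linarith : a - 1 < 0)]
  gcongr
  linarith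
end

section
/- For a ∈ (0,1), there exists C > 0 such that for all ω ≥ 1, |∫₀¹ x^{a−1} sin(ωx) dx − Γ(a) sin(πa/2)/ω^a + cos(ω)/ω| ≤ C/ω². -/
/-!
Since `Γ(1-a) x^(a-1) = ∫₀^∞ t^(-a) e^(-tx) dt`, Fubini turns `Γ(1-a) ∫₀¹ x^(a-1) sin(ωx) dx` into
`∫₀^∞ t^(-a) (ω - e^(-t) (ω cos ω + t sin ω)) / (t² + ω²) dt`. The term `ω / (t² + ω²)` integrates
exactly, by scaling `t = ωu`, to `ω^(-a) ∫₀^∞ u^(-a) / (1 + u²) du = Γ(a) Γ(1-a) sin(πa/2) ω^(-a)`,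
and replacing `ω / (t² + ω²)` by `1 / ω` in the `e^(-t)` term produces `-Γ(1-a) cos ω / ω`.
What remains is `e^(-t)` times a function bounded by `t² / ω³ + t / ω²`, so its `t^(-a)`-weighted
integral is at most `Γ(3-a) / ω³ + Γ(2-a) / ω²`.
-/

open Real MeasureTheory Set

section LaplaceRepresentation

variable {s : ℝ} {S : Set ℝ} {g : ℝ → ℝ}

lemma integral_rpow_sub_one_mul_exp_neg_mul (hs : 0 < s) {x : ℝ} (hx : 0 < x) :
    ∫ t in Ioi 0, t ^ (s - 1) * exp (-(t * x)) = Gamma s * x ^ (-s) := by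
  simp_rw [mul_comm _ x]
  rw [integral_rpow_mul_exp_neg_mul_Ioi hs hx, one_div, inv_rpow hx.le, rpow_neg hx.le, mul_comm]

lemma integrable_rpow_mul_exp_neg_mul_prod (hs : 0 < s) (hS : MeasurableSet S) (hS0 : S ⊆ Ioi 0)
    (hgm : AEStronglyMeasurable g (volume.restrict S))
    (hg : IntegrableOn (fun x => x ^ (-s) * g x) S) :
    Integrable (fun p : ℝ × ℝ => p.2 ^ (s - 1) * exp (-(p.2 * p.1)) * g p.1)
      ((volume.restrict S).prod (volume.restrict (Ioi 0))) := by
  have hmeas : AEStronglyMeasurable (fun p : ℝ × ℝ => p.2 ^ (s - 1) * exp (-(p.2 * p.1)) * g p.1)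
      ((volume.restrict S).prod (volume.restrict (Ioi 0))) :=
    (Measurable.aestronglyMeasurable (by fun_prop)).mul hgm.comp_fst
  refine (integrable_prod_iff hmeas).2 ⟨?_, ?_⟩
  · filter_upwards [ae_restrict_mem hS] with x hx
    refine Integrable.mul_const ?_ _
    have := integrableOn_rpow_mul_exp_neg_mul_rpow (by linarith : -1 < s - 1) one_pos (hS0 hx)
    simp only [rpow_one, neg_mul, mul_comm x] at this
    exact this
  · refine (hg.norm.const_mul (Gamma s)).congr ?_
    filter_upwards [ae_restrict_mem hS] with x hx
    have hx0 : 0 < x := hS0 hx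
    simp_rw [norm_mul, Real.norm_of_nonneg (exp_pos _).le]
    rw [integral_mul_const, norm_of_nonneg (rpow_nonneg hx0.le _),
      ← mul_assoc, ← integral_rpow_sub_one_mul_exp_neg_mul hs hx0]
    congr 1
    refine setIntegral_congr_fun measurableSet_Ioi fun t ht => ?_
    rw [norm_of_nonneg (rpow_nonneg (le_of_lt ht) _)]

lemma Gamma_mul_integral_rpow_neg_mul (hs : 0 < s) (hS : MeasurableSet S) (hS0 : S ⊆ Ioi 0)
    (hgm : AEStronglyMeasurable g (volume.restrict S))
    (hg : IntegrableOn (fun x => x ^ (-s) * g x) S) :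
    Gamma s * ∫ x in S, x ^ (-s) * g x
      = ∫ t in Ioi 0, t ^ (s - 1) * ∫ x in S, exp (-(t * x)) * g x := by
  calc Gamma s * ∫ x in S, x ^ (-s) * g x
      = ∫ x in S, ∫ t in Ioi 0, t ^ (s - 1) * exp (-(t * x)) * g x := by
        rw [← integral_const_mul]
        refine setIntegral_congr_fun hS fun x hx => ?_
        rw [integral_mul_const, integral_rpow_sub_one_mul_exp_neg_mul hs (hS0 hx), mul_assoc]
    _ = ∫ t in Ioi 0, ∫ x in S, t ^ (s - 1) * exp (-(t * x)) * g x :=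
        integral_integral_swap (integrable_rpow_mul_exp_neg_mul_prod hs hS hS0 hgm hg)
    _ = _ := by simp_rw [mul_assoc, integral_const_mul]

lemma integrableOn_rpow_mul_integral_exp_neg_mul (hs : 0 < s) (hS : MeasurableSet S)
    (hS0 : S ⊆ Ioi 0)
    (hgm : AEStronglyMeasurable g (volume.restrict S))
    (hg : IntegrableOn (fun x => x ^ (-s) * g x) S) :
    IntegrableOn (fun t => t ^ (s - 1) * ∫ x in S, exp (-(t * x)) * g x) (Ioi 0) := by
  have h := (integrable_rpow_mul_exp_neg_mul_prod hs hS hS0 hgm hg).integral_prod_right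
  simp only [mul_assoc, integral_const_mul] at h
  exact h

end LaplaceRepresentation

lemma integral_exp_neg_mul_mul_exp_neg {t : ℝ} (ht : -1 < t) :
    ∫ x in Ioi 0, exp (-(t * x)) * exp (-x) = (1 + t)⁻¹ := by
  calc ∫ x in Ioi 0, exp (-(t * x)) * exp (-x) = ∫ x in Ioi 0, exp (-(1 + t) * x) := by
        simp_rw [← exp_add]
        ring_nf
    _ = (1 + t)⁻¹ := by
        rw [integral_exp_mul_Ioi (by linarith) 0, mul_zero, exp_zero, neg_div_neg_eq, one_div]

lemma integral_rpow_neg_mul_inv_one_add {σ : ℝ} (hσ0 : 0 < σ) (hσ1 : σ < 1) :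
    ∫ t in Ioi 0, t ^ (-σ) * (1 + t)⁻¹ = π / sin (π * σ) := by
  have hGamma : ∫ x in Ioi 0, x ^ (-(1 - σ)) * exp (-x) = Gamma σ := by
    rw [Gamma_eq_integral hσ0]
    refine setIntegral_congr_fun measurableSet_Ioi fun x _ => ?_
    rw [neg_sub, mul_comm]
  have hlap := Gamma_mul_integral_rpow_neg_mul (s := 1 - σ) (g := fun x => exp (-x))
    (by linarith) measurableSet_Ioi subset_rfl (by fun_prop)
    (by rw [← integrableOn_congr_fun (fun x _ => by rw [neg_sub, mul_comm]) measurableSet_Ioi]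
        exact GammaIntegral_convergent hσ0)
  rw [hGamma, mul_comm, Gamma_mul_Gamma_one_sub] at hlap
  rw [hlap]
  refine setIntegral_congr_fun measurableSet_Ioi fun t ht => ?_
  rw [integral_exp_neg_mul_mul_exp_neg (by linarith [mem_Ioi.1 ht]), sub_sub_cancel_left]

lemma integral_rpow_neg_mul_inv_one_add_sq {a : ℝ} (ha₀ : -1 < a) (ha₁ : a < 1) :
    ∫ u in Ioi 0, u ^ (-a) * (1 + u ^ 2)⁻¹ = π / (2 * cos (π * a / 2)) := by
  have hsubst := integral_comp_rpow_Ioi_of_pos (g := fun v => v ^ (-((1 + a) / 2)) * (1 + v)⁻¹)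
    two_pos
  rw [integral_rpow_neg_mul_inv_one_add (by linarith) (by linarith),
    show π * ((1 + a) / 2) = π * a / 2 + π / 2 by ring, sin_add_pi_div_two] at hsubst
  rw [mul_comm, ← div_div, ← hsubst, ← integral_div]
  refine setIntegral_congr_fun measurableSet_Ioi fun x (hx : 0 < x) => ?_
  rw [smul_eq_mul, ← rpow_mul hx.le, rpow_two, mul_assoc, ← mul_assoc (x ^ _),
    ← rpow_add hx, show (2:ℝ) - 1 + 2 * -((1 + a) / 2) = -a by ring]
  ring

lemma integral_rpow_neg_mul_div_sq_add_sq {a ω : ℝ} (ha₀ : -1 < a) (ha₁ : a < 1) (hω : 0 < ω) :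
    ∫ t in Ioi 0, t ^ (-a) * (ω / (t ^ 2 + ω ^ 2)) = π / (2 * cos (π * a / 2)) * ω ^ (-a) := by
  have hscale := integral_comp_mul_left_Ioi (fun t => t ^ (-a) * (ω / (t ^ 2 + ω ^ 2))) 0 hω
  rw [mul_zero, smul_eq_mul, eq_inv_mul_iff_mul_eq₀ hω.ne'] at hscale
  rw [← hscale, ← integral_rpow_neg_mul_inv_one_add_sq ha₀ ha₁, ← integral_const_mul,
    ← integral_mul_const]
  refine setIntegral_congr_fun measurableSet_Ioi fun u (hu : 0 < u) => ?_
  rw [mul_rpow hω.le hu.le]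
  field_simp
  ring

lemma Gamma_mul_Gamma_one_sub_mul_sin_half {a : ℝ} (h : sin (π * a / 2) ≠ 0) :
    Gamma a * Gamma (1 - a) * sin (π * a / 2) = π / (2 * cos (π * a / 2)) := by
  rw [Gamma_mul_Gamma_one_sub, show π * a = 2 * (π * a / 2) by ring, sin_two_mul]
  rcases eq_or_ne (cos (π * a / 2)) 0 with hc | hc
  · simp [hc]
  · field_simp

lemma integral_exp_neg_mul_mul_sin {ω : ℝ} (hω : ω ≠ 0) (t : ℝ) :
    ∫ x in (0:ℝ)..1, exp (-(t * x)) * sin (ω * x)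
      = (ω - exp (-t) * (ω * cos ω + t * sin ω)) / (t ^ 2 + ω ^ 2) := by
  have hden : t ^ 2 + ω ^ 2 ≠ 0 := by positivity
  have hderiv : ∀ x ∈ uIcc (0:ℝ) 1, HasDerivAt
      (fun x => -(exp (-(t * x)) * (t * sin (ω * x) + ω * cos (ω * x))) / (t ^ 2 + ω ^ 2))
      (exp (-(t * x)) * sin (ω * x)) x := by
    intro x _
    have hexp : HasDerivAt (fun x => exp (-(t * x))) (exp (-(t * x)) * -t) x := by
      simpa using ((hasDerivAt_id x).const_mul t).neg.exp
    have htrig : HasDerivAt (fun x => t * sin (ω * x) + ω * cos (ω * x))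
        (t * (cos (ω * x) * ω) + ω * (-sin (ω * x) * ω)) x := by
      have hlin : HasDerivAt (fun x => ω * x) ω x := by simpa using (hasDerivAt_id x).const_mul ω
      exact (hlin.sin.const_mul t).add (hlin.cos.const_mul ω)
    refine ((hexp.mul htrig).neg.div_const (t ^ 2 + ω ^ 2)).congr_deriv ?_
    field_simp
    ring
  rw [intervalIntegral.integral_eq_sub_of_hasDerivAt hderiv
    (Continuous.intervalIntegrable (by fun_prop) _ _)]
  simp only [mul_one, mul_zero, neg_zero, exp_zero, sin_zero, cos_zero, zero_add, one_mul]
  field_simp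
  ring

noncomputable def sinLaplaceRemainder (ω t : ℝ) : ℝ :=
  (cos ω * t ^ 2 / ω - sin ω * t) / (t ^ 2 + ω ^ 2)

lemma integral_exp_neg_mul_mul_sin_eq {ω : ℝ} (hω : ω ≠ 0) (t : ℝ) :
    ∫ x in (0:ℝ)..1, exp (-(t * x)) * sin (ω * x)
      = ω / (t ^ 2 + ω ^ 2) - cos ω / ω * exp (-t) + exp (-t) * sinLaplaceRemainder ω t := by
  have hden : t ^ 2 + ω ^ 2 ≠ 0 := by positivity
  rw [integral_exp_neg_mul_mul_sin hω, sinLaplaceRemainder]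
  field_simp
  ring

lemma abs_sinLaplaceRemainder_le {ω t : ℝ} (hω : 0 < ω) (ht : 0 ≤ t) :
    |sinLaplaceRemainder ω t| ≤ t ^ 2 / ω ^ 3 + t / ω ^ 2 := by
  have hnum : |cos ω * t ^ 2 / ω - sin ω * t| ≤ t ^ 2 / ω + t := by
    calc |cos ω * t ^ 2 / ω - sin ω * t| ≤ |cos ω| * (t ^ 2 / ω) + |sin ω| * t := by
          refine (abs_sub _ _).trans (le_of_eq ?_)
          rw [mul_div_assoc, abs_mul, abs_mul, abs_of_nonneg (by positivity : 0 ≤ t ^ 2 / ω),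
            abs_of_nonneg ht]
      _ ≤ 1 * (t ^ 2 / ω) + 1 * t := by
          gcongr
          exacts [abs_cos_le_one ω, abs_sin_le_one ω]
      _ = t ^ 2 / ω + t := by ring
  calc |sinLaplaceRemainder ω t| ≤ (t ^ 2 / ω + t) / ω ^ 2 := by
        rw [sinLaplaceRemainder, abs_div, abs_of_pos (by positivity : 0 < t ^ 2 + ω ^ 2)]
        gcongr
        linarith [sq_nonneg t]
    _ = t ^ 2 / ω ^ 3 + t / ω ^ 2 := by field_simp

lemma norm_rpow_mul_exp_neg_mul_sinLaplaceRemainder_le {a ω t : ℝ} (hω : 0 < ω) (ht : 0 < t) :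
    ‖t ^ (-a) * exp (-t) * sinLaplaceRemainder ω t‖
      ≤ exp (-t) * t ^ (3 - a - 1) / ω ^ 3 + exp (-t) * t ^ (2 - a - 1) / ω ^ 2 := by
  have hpow : ∀ n : ℕ, t ^ (-a) * t ^ n = t ^ ((n : ℝ) + 1 - a - 1) := fun n => by
    rw [← rpow_natCast, ← rpow_add ht]
    ring_nf
  calc ‖t ^ (-a) * exp (-t) * sinLaplaceRemainder ω t‖
      = t ^ (-a) * exp (-t) * |sinLaplaceRemainder ω t| := by
        rw [norm_mul, norm_of_nonneg (by positivity), Real.norm_eq_abs]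
    _ ≤ t ^ (-a) * exp (-t) * (t ^ 2 / ω ^ 3 + t / ω ^ 2) := by
        gcongr
        exact abs_sinLaplaceRemainder_le hω ht.le
    _ = exp (-t) * (t ^ (-a) * t ^ 2) / ω ^ 3 + exp (-t) * (t ^ (-a) * t ^ 1) / ω ^ 2 := by ring
    _ = _ := by rw [hpow, hpow]; norm_num

lemma integrableOn_rpow_mul_exp_neg_mul_sinLaplaceRemainder {a ω : ℝ} (ha : a < 2)
    (hω : 0 < ω) :
    IntegrableOn (fun t => t ^ (-a) * exp (-t) * sinLaplaceRemainder ω t) (Ioi 0) := by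
  have h3 := GammaIntegral_convergent (by linarith : 0 < 3 - a)
  have h2 := GammaIntegral_convergent (by linarith : 0 < 2 - a)
  refine Integrable.mono' ((h3.div_const (ω ^ 3)).add (h2.div_const (ω ^ 2))) ?_ ?_
  · unfold sinLaplaceRemainder
    exact Measurable.aestronglyMeasurable (by fun_prop)
  · filter_upwards [ae_restrict_mem measurableSet_Ioi] with t ht
    exact norm_rpow_mul_exp_neg_mul_sinLaplaceRemainder_le hω ht

lemma abs_integral_rpow_mul_exp_neg_mul_sinLaplaceRemainder_le {a ω : ℝ} (ha : a < 2)
    (hω : 0 < ω) :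
    |∫ t in Ioi 0, t ^ (-a) * exp (-t) * sinLaplaceRemainder ω t|
      ≤ Gamma (3 - a) / ω ^ 3 + Gamma (2 - a) / ω ^ 2 := by
  have h3 := GammaIntegral_convergent (by linarith : 0 < 3 - a)
  have h2 := GammaIntegral_convergent (by linarith : 0 < 2 - a)
  rw [← Real.norm_eq_abs, Gamma_eq_integral (by linarith : 0 < 3 - a),
    Gamma_eq_integral (by linarith : 0 < 2 - a),
    ← integral_div, ← integral_div, ← integral_add (h3.div_const (ω ^ 3)) (h2.div_const (ω ^ 2))]
  refine norm_integral_le_of_norm_le ((h3.div_const (ω ^ 3)).add (h2.div_const (ω ^ 2))) ?_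
  filter_upwards [ae_restrict_mem measurableSet_Ioi] with t ht
  exact norm_rpow_mul_exp_neg_mul_sinLaplaceRemainder_le hω ht

lemma integrableOn_rpow_mul_sin_Ioc {b : ℝ} (hb : -1 < b) (ω : ℝ) :
    IntegrableOn (fun x => x ^ b * sin (ω * x)) (Ioc 0 1) :=
  (intervalIntegral.intervalIntegrable_rpow' hb).1.mul_bdd (by fun_prop)
    (ae_of_all _ fun x => by simpa using abs_sin_le_one (ω * x))

lemma Gamma_one_sub_mul_integral_rpow_mul_sin {a : ℝ} (ha₀ : 0 < a) (ha₁ : a < 1) (ω : ℝ) :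
    Gamma (1 - a) * ∫ x in (0:ℝ)..1, x ^ (a - 1) * sin (ω * x)
      = ∫ t in Ioi 0, t ^ (-a) * ∫ x in (0:ℝ)..1, exp (-(t * x)) * sin (ω * x) := by
  have h := Gamma_mul_integral_rpow_neg_mul (s := 1 - a) (g := fun x => sin (ω * x))
    (by linarith) measurableSet_Ioc Ioc_subset_Ioi_self (by fun_prop)
    (by simpa only [neg_sub] using integrableOn_rpow_mul_sin_Ioc (by linarith) ω)
  simpa only [neg_sub, sub_sub_cancel_left, intervalIntegral.integral_of_le zero_le_one] using h

lemma integrableOn_rpow_mul_integral_exp_neg_mul_mul_sin {a : ℝ} (ha₀ : 0 < a) (ha₁ : a < 1)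
    (ω : ℝ) :
    IntegrableOn (fun t => t ^ (-a) * ∫ x in (0:ℝ)..1, exp (-(t * x)) * sin (ω * x)) (Ioi 0) := by
  have h := integrableOn_rpow_mul_integral_exp_neg_mul (s := 1 - a) (g := fun x => sin (ω * x))
    (by linarith) measurableSet_Ioc Ioc_subset_Ioi_self (by fun_prop)
    (by simpa only [neg_sub] using integrableOn_rpow_mul_sin_Ioc (by linarith) ω)
  simpa only [sub_sub_cancel_left, intervalIntegral.integral_of_le zero_le_one] using h

lemma Gamma_one_sub_mul_integral_rpow_mul_sin_sub {a ω : ℝ} (ha₀ : 0 < a) (ha₁ : a < 1)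
    (hω : 0 < ω) :
    Gamma (1 - a) * ((∫ x in (0:ℝ)..1, x ^ (a - 1) * sin (ω * x))
        - Gamma a * sin (π * a / 2) / ω ^ a + cos ω / ω)
      = ∫ t in Ioi 0, t ^ (-a) * exp (-t) * sinLaplaceRemainder ω t := by
  set P := fun t : ℝ => t ^ (-a) * (ω / (t ^ 2 + ω ^ 2))
  set E := fun t : ℝ => t ^ (-a) * exp (-t)
  set R := fun t : ℝ => t ^ (-a) * exp (-t) * sinLaplaceRemainder ω t
  have hsplit : ∀ t, t ^ (-a) * ∫ x in (0:ℝ)..1, exp (-(t * x)) * sin (ω * x)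
      = P t - cos ω / ω * E t + R t := fun t => by
    rw [integral_exp_neg_mul_mul_sin_eq hω.ne']
    ring
  have hEval : ∫ t in Ioi 0, E t = Gamma (1 - a) := by
    rw [Gamma_eq_integral (by linarith)]
    refine setIntegral_congr_fun measurableSet_Ioi fun t _ => ?_
    rw [sub_sub_cancel_left, mul_comm]
  have hE : IntegrableOn E (Ioi 0) := by
    refine (GammaIntegral_convergent (by linarith : 0 < 1 - a)).congr_fun (fun t _ => ?_)
      measurableSet_Ioi
    simp only [E, sub_sub_cancel_left, mul_comm]
  have hR : IntegrableOn R (Ioi 0) :=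
    integrableOn_rpow_mul_exp_neg_mul_sinLaplaceRemainder (by linarith) hω
  have hP : IntegrableOn P (Ioi 0) := by
    refine ((integrableOn_rpow_mul_integral_exp_neg_mul_mul_sin ha₀ ha₁ ω).add
      ((hE.const_mul (cos ω / ω)).sub hR)).congr_fun (fun t _ => ?_) measurableSet_Ioi
    simp only [Pi.add_apply, Pi.sub_apply, hsplit]
    ring
  have hsin : sin (π * a / 2) ≠ 0 :=
    (sin_pos_of_pos_of_lt_pi (by positivity) (by nlinarith [pi_pos])).ne'
  rw [mul_add, mul_sub, Gamma_one_sub_mul_integral_rpow_mul_sin ha₀ ha₁]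
  simp only [hsplit]
  rw [integral_add (f := fun t => P t - cos ω / ω * E t) (hP.sub (hE.const_mul _)) hR,
    integral_sub hP (hE.const_mul _), integral_const_mul, hEval,
    integral_rpow_neg_mul_div_sq_add_sq (by linarith) ha₁ hω,
    ← Gamma_mul_Gamma_one_sub_mul_sin_half hsin, rpow_neg hω.le]
  ring

theorem stmt_5 (a : ℝ) (ha : a ∈ Set.Ioo (0:ℝ) 1) :
    ∃ C > (0:ℝ), ∀ ω : ℝ, 1 ≤ ω →
      |(∫ x in (0:ℝ)..1, x ^ (a - 1) * Real.sin (ω * x)) -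
        Real.Gamma a * Real.sin (Real.pi * a / 2) / ω ^ a + Real.cos ω / ω| ≤ C / ω ^ 2 := by
  obtain ⟨ha₀, ha₁⟩ := ha
  have hΓ₁ : 0 < Gamma (1 - a) := Gamma_pos_of_pos (by linarith)
  have hΓ₂ : 0 < Gamma (2 - a) := Gamma_pos_of_pos (by linarith)
  have hΓ₃ : 0 < Gamma (3 - a) := Gamma_pos_of_pos (by linarith)
  refine ⟨(Gamma (3 - a) + Gamma (2 - a)) / Gamma (1 - a), by positivity, fun ω hω => ?_⟩
  have hω₀ : 0 < ω := by linarith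
  have hbound :=
    abs_integral_rpow_mul_exp_neg_mul_sinLaplaceRemainder_le (a := a) (by linarith) hω₀
  rw [← Gamma_one_sub_mul_integral_rpow_mul_sin_sub ha₀ ha₁ hω₀, abs_mul, abs_of_pos hΓ₁]
    at hbound
  have hω₃ : Gamma (3 - a) / ω ^ 3 ≤ Gamma (3 - a) / ω ^ 2 := by
    gcongr
    norm_num
  rw [div_right_comm, le_div_iff₀ hΓ₁, mul_comm, add_div]
  linarith
end

section
/- For H ∈ (1/2, 1) and positive reals n*, m*, the double integral ∫₀¹∫₀¹ 2[x^{2H} + y^{2H} − ((x+y)^{2H} + |x−y|^{2H})/2] sin(n*x) sin(m*y) dx dy, where n* = (n+1/2)π and m* = (m+1/2)π with n, m nonnegative integers, equals (2H(2H−1)/(n* m*)) ∫₀¹∫₀¹ (|x−y|^{2H−2} − (x+y)^{2H−2}) cos(n*x) cos(m*y) dx dy. -/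
/-!
Integrate by parts first in `x`, then in `y`. The boundary terms vanish because the kernel
vanishes on the axes (`K(0, y) = 0`, and `∂ₓK(x, 0) = 0`) and because `cos n* = cos m* = 0`.
The mixed derivative has the integrable singularity `|x - y| ^ (2H - 2)` on the diagonal, so the
second integration by parts goes through the fundamental theorem of calculus off the point `y = x`.
-/

open Real Set intervalIntegral
open MeasureTheory (volume)

lemma continuous_abs_rpow_sub_two_mul {p : ℝ} (hp : 1 < p) :
    Continuous fun u : ℝ => |u| ^ (p - 2) * u := by
  have h := (contDiff_norm_rpow (E := ℝ) hp).continuous_deriv_one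
  rw [funext fun u => (hasDerivAt_norm_rpow u hp).deriv] at h
  simpa [mul_assoc, (by linarith : p ≠ 0)] using h.const_mul p⁻¹

lemma hasDerivAt_abs_rpow_sub_two_mul (p : ℝ) {u : ℝ} (hu : u ≠ 0) :
    HasDerivAt (fun u : ℝ => |u| ^ (p - 2) * u) ((p - 1) * |u| ^ (p - 2)) u := by
  have habs : |u| ≠ 0 := abs_ne_zero.2 hu
  refine (((hasDerivAt_abs hu).rpow_const (Or.inl habs)).mul (hasDerivAt_id' u)).congr_deriv ?_
  have hsign : (SignType.sign u : ℝ) * u = |u| := sign_mul_self u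
  rw [rpow_sub_one habs]
  linear_combination (norm := skip) (p - 2) * |u| ^ (p - 2) / |u| * hsign
  field_simp
  ring

lemma intervalIntegrable_abs_rpow {r : ℝ} (hr : -1 < r) (a b : ℝ) :
    IntervalIntegrable (fun u : ℝ => |u| ^ r) volume a b := by
  suffices h : ∀ c, 0 ≤ c → IntervalIntegrable (fun u : ℝ => |u| ^ r) volume 0 c by
    have h' : ∀ c, IntervalIntegrable (fun u : ℝ => |u| ^ r) volume 0 c := by
      intro c
      rcases le_total 0 c with hc | hc
      · exact h c hc
      · rw [IntervalIntegrable.iff_comp_neg]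
        simpa using h (-c) (by linarith)
    exact (h' a).symm.trans (h' b)
  intro c hc
  refine (intervalIntegrable_rpow' hr).congr ?_
  intro u hu
  rw [uIoc_of_le hc] at hu
  simp [abs_of_pos hu.1]

lemma integral_mul_sin_eq_inv_mul_integral_mul_cos {f f' : ℝ → ℝ} {a : ℝ} {s : Set ℝ}
    (ha : a ≠ 0) (hcos : cos a = 0) (hs : s.Countable) (hf : ContinuousOn f (Icc 0 1))
    (hf_zero : f 0 = 0) (hf' : ∀ x ∈ Ioo 0 1 \ s, HasDerivAt f (f' x) x)
    (hf'_int : IntervalIntegrable f' volume 0 1) :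
    ∫ x in 0..1, f x * sin (a * x) = a⁻¹ * ∫ x in 0..1, f' x * cos (a * x) := by
  have h_int₁ : IntervalIntegrable (fun x => f x * sin (a * x)) volume 0 1 :=
    (hf.mul (by fun_prop)).intervalIntegrable_of_Icc zero_le_one
  have h_int₂ : IntervalIntegrable (fun x => a⁻¹ * (f' x * cos (a * x))) volume 0 1 :=
    (hf'_int.mul_continuousOn (by fun_prop)).const_mul _
  -- `-f(x) cos(ax) / a` is a primitive of the difference, and it vanishes at both ends
  have h_ftc := MeasureTheory.integral_eq_of_hasDerivAt_off_countable_of_le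
    (fun x => -(f x * cos (a * x)) / a) (fun x => f x * sin (a * x) - a⁻¹ * (f' x * cos (a * x)))
    zero_le_one hs
    ((hf.mul (by fun_prop)).neg.div_const a) (fun x hx =>
      (((hf' x hx).mul ((hasDerivAt_id' x).const_mul a).cos).neg.div_const a).congr_deriv
        (by field_simp; ring)) (h_int₁.sub h_int₂)
  simp only [mul_one, hcos, mul_zero, hf_zero, zero_mul, neg_zero, zero_div, sub_zero] at h_ftc
  rwa [integral_sub h_int₁ h_int₂, integral_const_mul,
    sub_eq_zero] at h_ftc

lemma intervalIntegral_intervalIntegral_swap_of_continuous {F : ℝ → ℝ → ℝ}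
    (hF : Continuous F.uncurry) (a b c d : ℝ) :
    ∫ x in a..b, ∫ y in c..d, F x y = ∫ y in c..d, ∫ x in a..b, F x y :=
  MeasureTheory.intervalIntegral_intervalIntegral_swap <|
    (hF.continuousOn.integrableOn_compact (isCompact_uIcc.prod isCompact_uIcc)).mono_set
      (prod_mono uIoc_subset_uIcc uIoc_subset_uIcc)

theorem integral_integral_mul_sin_mul_sin_eq {F F₁ F₁₂ : ℝ → ℝ → ℝ} {a b : ℝ}
    (ha : a ≠ 0) (hb : b ≠ 0) (hcos_a : cos a = 0) (hcos_b : cos b = 0)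
    (hF : Continuous F.uncurry) (hF₁ : Continuous F₁.uncurry)
    (hF_zero : ∀ y ∈ Icc (0 : ℝ) 1, F 0 y = 0) (hF₁_zero : ∀ x ∈ Icc (0 : ℝ) 1, F₁ x 0 = 0)
    (hF_deriv : ∀ y ∈ Icc (0 : ℝ) 1, ∀ x ∈ Ioo (0 : ℝ) 1, HasDerivAt (F · y) (F₁ x y) x)
    (hF₁_deriv : ∀ x ∈ Icc (0 : ℝ) 1, ∀ y ∈ Ioo (0 : ℝ) 1 \ {x}, HasDerivAt (F₁ x) (F₁₂ x y) y)
    (hF₁₂_int : ∀ x ∈ Icc (0 : ℝ) 1, IntervalIntegrable (F₁₂ x) volume 0 1) :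
    ∫ x in 0..1, ∫ y in 0..1, F x y * sin (a * x) * sin (b * y)
      = (a * b)⁻¹ * ∫ x in 0..1, ∫ y in 0..1, F₁₂ x y * cos (a * x) * cos (b * y) := by
  have ibp_fst : ∀ y ∈ uIcc (0 : ℝ) 1,
      ∫ x in 0..1, F x y * sin (a * x) = a⁻¹ * ∫ x in 0..1, F₁ x y * cos (a * x) := by
    intro y hy
    rw [uIcc_of_le zero_le_one] at hy
    exact integral_mul_sin_eq_inv_mul_integral_mul_cos ha hcos_a countable_empty
      (hF.uncurry_right y).continuousOn (hF_zero y hy) (fun x hx => hF_deriv y hy x hx.1)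
      ((hF₁.uncurry_right y).intervalIntegrable 0 1)
  have ibp_snd : ∀ x ∈ uIcc (0 : ℝ) 1,
      ∫ y in 0..1, F₁ x y * sin (b * y) = b⁻¹ * ∫ y in 0..1, F₁₂ x y * cos (b * y) := by
    intro x hx
    rw [uIcc_of_le zero_le_one] at hx
    exact integral_mul_sin_eq_inv_mul_integral_mul_cos hb hcos_b (countable_singleton x)
      (hF₁.uncurry_left x).continuousOn (hF₁_zero x hx) (hF₁_deriv x hx) (hF₁₂_int x hx)
  have hF' : Continuous fun z : ℝ × ℝ => F z.1 z.2 := hF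
  have hF₁' : Continuous fun z : ℝ × ℝ => F₁ z.1 z.2 := hF₁
  calc ∫ x in 0..1, ∫ y in 0..1, F x y * sin (a * x) * sin (b * y)
      = ∫ y in 0..1, (∫ x in 0..1, F x y * sin (a * x)) * sin (b * y) := by
        rw [intervalIntegral_intervalIntegral_swap_of_continuous (by fun_prop)]
        simp only [integral_mul_const]
    _ = ∫ y in 0..1, a⁻¹ * ((∫ x in 0..1, F₁ x y * cos (a * x)) * sin (b * y)) :=
        integral_congr fun y hy => by rw [ibp_fst y hy, mul_assoc]
    _ = a⁻¹ * ∫ x in 0..1, cos (a * x) * ∫ y in 0..1, F₁ x y * sin (b * y) := by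
        rw [integral_const_mul]
        simp only [← integral_mul_const, ← integral_const_mul]
        rw [intervalIntegral_intervalIntegral_swap_of_continuous (by fun_prop)]
        exact integral_congr fun x _ => integral_congr fun y _ => by ring
    _ = a⁻¹ * ∫ x in 0..1, cos (a * x) * (b⁻¹ * ∫ y in 0..1, F₁₂ x y * cos (b * y)) := by
        rw [integral_congr fun x hx => by rw [ibp_snd x hx]]
    _ = (a * b)⁻¹ * ∫ x in 0..1, ∫ y in 0..1, F₁₂ x y * cos (a * x) * cos (b * y) := by
        simp only [mul_inv, mul_assoc, ← integral_const_mul]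
        exact integral_congr fun x _ => integral_congr fun y _ => by ring

-- The covariance of sub-fractional Brownian motion, written with the exponent `p = 2H`.
noncomputable def subFBMCov (p s t : ℝ) : ℝ :=
  s ^ p + t ^ p - ((s + t) ^ p + |s - t| ^ p) / 2

noncomputable def subFBMCovDerivFst (p s t : ℝ) : ℝ :=
  p * s ^ (p - 1) - p / 2 * ((s + t) ^ (p - 1) + |s - t| ^ (p - 2) * (s - t))

noncomputable def subFBMCovDerivFstSnd (p s t : ℝ) : ℝ :=
  p * (p - 1) / 2 * (|s - t| ^ (p - 2) - (s + t) ^ (p - 2))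

section SubFBMCov

variable {p : ℝ}

lemma continuous_subFBMCov (hp : 0 < p) : Continuous (Function.uncurry (subFBMCov p)) := by
  unfold subFBMCov Function.uncurry
  fun_prop (disch := positivity)

lemma continuous_subFBMCovDerivFst (hp : 1 < p) :
    Continuous (Function.uncurry (subFBMCovDerivFst p)) := by
  have h₁ : Continuous fun u : ℝ => u ^ (p - 1) := continuous_rpow_const (by linarith)
  have h₂ := continuous_abs_rpow_sub_two_mul hp
  exact (continuous_const.mul (h₁.comp continuous_fst)).sub <| continuous_const.mul <|
    (h₁.comp (continuous_fst.add continuous_snd)).add (h₂.comp (continuous_fst.sub continuous_snd))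

lemma subFBMCov_zero_left (hp : p ≠ 0) {t : ℝ} (ht : 0 ≤ t) : subFBMCov p 0 t = 0 := by
  simp [subFBMCov, zero_rpow hp, abs_of_nonneg ht]

lemma subFBMCovDerivFst_zero_right (hp : p ≠ 1) {s : ℝ} (hs : 0 ≤ s) :
    subFBMCovDerivFst p s 0 = 0 := by
  rcases hs.eq_or_lt with rfl | hs
  · simp [subFBMCovDerivFst, zero_rpow (sub_ne_zero.2 hp)]
  · rw [subFBMCovDerivFst, add_zero, sub_zero, abs_of_pos hs, ← rpow_add_one hs.ne']
    ring_nf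

lemma hasDerivAt_subFBMCov_fst (hp : 1 < p) (s t : ℝ) :
    HasDerivAt (subFBMCov p · t) (subFBMCovDerivFst p s t) s := by
  have h₁ := hasDerivAt_rpow_const (x := s) (Or.inr hp.le)
  have h₂ := (hasDerivAt_rpow_const (x := s + t) (Or.inr hp.le)).comp s
    ((hasDerivAt_id' s).add_const t)
  have h₃ := (hasDerivAt_abs_rpow (s - t) hp).comp s ((hasDerivAt_id' s).sub_const t)
  refine (((h₁.add_const _).sub ((h₂.add h₃).div_const 2))).congr_deriv ?_
  simp only [subFBMCovDerivFst]
  ring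

lemma hasDerivAt_subFBMCovDerivFst_snd {s t : ℝ} (hs : 0 ≤ s) (ht : 0 < t) (hst : t ≠ s) :
    HasDerivAt (subFBMCovDerivFst p s) (subFBMCovDerivFstSnd p s t) t := by
  have h₂ := (hasDerivAt_rpow_const (p := p - 1) (x := s + t) (Or.inl (by positivity))).comp t
    ((hasDerivAt_id' t).const_add s)
  have h₃ := (hasDerivAt_abs_rpow_sub_two_mul p (sub_ne_zero.2 hst.symm)).comp t
    ((hasDerivAt_id' t).const_sub s)
  refine ((hasDerivAt_const t _).sub ((h₂.add h₃).const_mul (p / 2))).congr_deriv ?_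
  simp only [subFBMCovDerivFstSnd]
  ring_nf

lemma intervalIntegrable_subFBMCovDerivFstSnd (hp : 1 < p) (s a b : ℝ) :
    IntervalIntegrable (subFBMCovDerivFstSnd p s) volume a b := by
  have hr : -1 < p - 2 := by linarith
  have h₁ := (intervalIntegrable_abs_rpow hr (s - a) (s - b)).comp_sub_left s
  have h₂ := (intervalIntegrable_rpow' hr (a := s + a) (b := s + b)).comp_add_left s
  simp only [sub_sub_cancel, add_sub_cancel_left] at h₁ h₂
  exact (h₁.sub h₂).const_mul _

end SubFBMCov

theorem stmt_9 (H : ℝ) (hH : H ∈ Set.Ioo (1/2 : ℝ) 1) (n m : ℕ) :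
    (∫ x in (0:ℝ)..1, ∫ y in (0:ℝ)..1,
        2 * (x ^ (2 * H) + y ^ (2 * H) - ((x + y) ^ (2 * H) + |x - y| ^ (2 * H)) / 2) *
          Real.sin (((n : ℝ) + 1/2) * Real.pi * x) * Real.sin (((m : ℝ) + 1/2) * Real.pi * y))
      = 2 * H * (2 * H - 1) / ((((n : ℝ) + 1/2) * Real.pi) * (((m : ℝ) + 1/2) * Real.pi)) *
        ∫ x in (0:ℝ)..1, ∫ y in (0:ℝ)..1,
          (|x - y| ^ (2 * H - 2) - (x + y) ^ (2 * H - 2)) *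
            Real.cos (((n : ℝ) + 1/2) * Real.pi * x) * Real.cos (((m : ℝ) + 1/2) * Real.pi * y) := by
  have hp : 1 < 2 * H := by linarith [hH.1]
  have half_odd_pi_ne_zero (k : ℕ) : ((k : ℝ) + 1/2) * π ≠ 0 := by positivity
  have cos_half_odd_pi (k : ℕ) : cos (((k : ℝ) + 1/2) * π) = 0 :=
    cos_eq_zero_iff.2 ⟨k, by push_cast; ring⟩
  have key := integral_integral_mul_sin_mul_sin_eq
    (F := fun x y => 2 * subFBMCov (2 * H) x y)
    (F₁ := fun x y => 2 * subFBMCovDerivFst (2 * H) x y)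
    (F₁₂ := fun x y => 2 * subFBMCovDerivFstSnd (2 * H) x y)
    (half_odd_pi_ne_zero n) (half_odd_pi_ne_zero m) (cos_half_odd_pi n) (cos_half_odd_pi m)
    (continuous_const.mul (continuous_subFBMCov (by linarith)))
    (continuous_const.mul (continuous_subFBMCovDerivFst hp))
    (fun y hy => by simp [subFBMCov_zero_left (by linarith : (0 : ℝ) < 2 * H).ne' hy.1])
    (fun x hx => by simp [subFBMCovDerivFst_zero_right hp.ne' hx.1])
    (fun y _ x _ => (hasDerivAt_subFBMCov_fst hp x y).const_mul 2)
    (fun x hx y hy => (hasDerivAt_subFBMCovDerivFst_snd hx.1 hy.1.1 hy.2).const_mul 2)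
    (fun x _ => (intervalIntegrable_subFBMCovDerivFstSnd hp x 0 1).const_mul 2)
  refine key.trans ?_
  simp only [subFBMCovDerivFstSnd, mul_assoc, integral_const_mul]
  field_simp
end

section
/- For nonnegative integers n ≠ m with n* = (n+1/2)π, m* = (m+1/2)π, the double integral over the triangle {(x,y) : x ≥ 0, y ≥ 0, x + y ≤ 1} of (x+y)^{2H−2} cos(n*x) cos(m*y) (with H ∈ (1/2,1)) equals (1/2)[1/(m*+n*) ∫₀¹ u^{2H−2}(sin(m*u)+sin(n*u)) du + 1/(m*−n*) ∫₀¹ u^{2H−2}(sin(m*u)−sin(n*u)) du]. -/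
/-!
The shear `(u, y) ↦ (u - y, y)` preserves Lebesgue measure and maps the triangle
`{0 ≤ y ≤ u ≤ 1}` onto `{x, y ≥ 0, x + y ≤ 1}`, so by Fubini the integral becomes
`∫₀¹ u ^ (2H - 2) ∫₀ᵘ cos (n* (u - y)) cos (m* y) dy du`. Integrability holds because
`u ^ (2H - 2)` is integrable on `[0, 1]` (as `2H - 2 > -1`) and the rest is bounded, and the inner
integral is elementary after the product-to-sum formula.
-/

open Real MeasureTheory Set

theorem integral_cos_sub_mul (c k u : ℝ) (hk : k ≠ 0) :
    ∫ y in (0:ℝ)..u, cos (c - k * y) = (sin c - sin (c - k * u)) / k := by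
  simp [intervalIntegral.integral_comp_sub_mul cos hk, div_eq_inv_mul]

theorem integral_cos_mul_sub_mul_cos {a b : ℝ} (hsum : b + a ≠ 0) (hdiff : b - a ≠ 0) (u : ℝ) :
    ∫ y in (0:ℝ)..u, cos (a * (u - y)) * cos (b * y)
      = ((sin (b * u) + sin (a * u)) / (b + a) + (sin (b * u) - sin (a * u)) / (b - a)) / 2 := by
  have product_to_sum : ∀ y, cos (a * (u - y)) * cos (b * y)
      = (cos (a * u - (b + a) * y) + cos (a * u - (a - b) * y)) / 2 := fun y => by
    rw [eq_div_iff two_ne_zero, mul_comm _ (2:ℝ), ← mul_assoc, two_mul_cos_mul_cos]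
    ring_nf
  have hdiff' : a - b ≠ 0 := fun h => hdiff (by linarith)
  simp_rw [product_to_sum]
  rw [intervalIntegral.integral_div,
    intervalIntegral.integral_add (Continuous.intervalIntegrable (by fun_prop) _ _)
      (Continuous.intervalIntegrable (by fun_prop) _ _),
    integral_cos_sub_mul _ _ _ hsum, integral_cos_sub_mul _ _ _ hdiff']
  rw [show a * u - (b + a) * u = -(b * u) by ring, show a * u - (a - b) * u = b * u by ring,
    sin_neg]
  field_simp
  ring

theorem measurableEmbedding_sub_prod {G : Type*} [MeasurableSpace G] [AddGroup G]
    [MeasurableAdd₂ G] [MeasurableNeg G] :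
    MeasurableEmbedding (fun z : G × G => (z.1 - z.2, z.2)) :=
  ((MeasurableEquiv.prodComm.trans (MeasurableEquiv.shearSubRight G)).trans
    MeasurableEquiv.prodComm).measurableEmbedding

theorem setIntegral_triangle_eq {E : Type*} [NormedAddCommGroup E] [NormedSpace ℝ E]
    (F : ℝ × ℝ → E) :
    ∫ p in {p : ℝ × ℝ | 0 ≤ p.1 ∧ 0 ≤ p.2 ∧ p.1 + p.2 ≤ 1}, F p
      = ∫ p in {p : ℝ × ℝ | p.1 ∈ Icc 0 1 ∧ p.2 ∈ Icc 0 p.1}, F (p.1 - p.2, p.2) := by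
  have hshear : MeasurePreserving (fun z : ℝ × ℝ => (z.1 - z.2, z.2)) := by
    rw [Measure.volume_eq_prod]
    exact measurePreserving_sub_prod volume volume
  rw [← hshear.setIntegral_preimage_emb measurableEmbedding_sub_prod]
  congr 2
  ext ⟨u, y⟩
  simp only [mem_preimage, mem_ofPred_eq, mem_Icc, sub_add_cancel, sub_nonneg]
  constructor
  · rintro ⟨hyu, hy, hu⟩
    exact ⟨⟨hy.trans hyu, hu⟩, hy, hyu⟩
  · rintro ⟨⟨-, hu⟩, hy, hyu⟩
    exact ⟨hyu, hy, hu⟩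

theorem setIntegral_triangle_eq_intervalIntegral {E : Type*} [NormedAddCommGroup E]
    [NormedSpace ℝ E] {G : ℝ × ℝ → E}
    (hG : IntegrableOn G {p : ℝ × ℝ | p.1 ∈ Icc 0 1 ∧ p.2 ∈ Icc 0 p.1}) :
    ∫ p in {p : ℝ × ℝ | p.1 ∈ Icc 0 1 ∧ p.2 ∈ Icc 0 p.1}, G p
      = ∫ u in (0:ℝ)..1, ∫ y in (0:ℝ)..u, G (u, y) := by
  set T := {p : ℝ × ℝ | p.1 ∈ Icc 0 1 ∧ p.2 ∈ Icc 0 p.1}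
  have hT : MeasurableSet T :=
    (measurable_fst measurableSet_Icc).inter
      ((measurableSet_le measurable_const measurable_snd).inter
        (measurableSet_le measurable_snd measurable_fst))
  have fiber (u : ℝ) : ∫ y, T.indicator G (u, y)
      = (Icc 0 1).indicator (fun u => ∫ y in (0:ℝ)..u, G (u, y)) u := by
    by_cases hu : u ∈ Icc 0 1
    · have : (fun y => T.indicator G (u, y)) = (Icc 0 u).indicator (fun y => G (u, y)) := by
        ext y
        by_cases hy : y ∈ Icc 0 u
        · rw [indicator_of_mem hy, indicator_of_mem (show (u, y) ∈ T from ⟨hu, hy⟩)]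
        · rw [indicator_of_notMem hy, indicator_of_notMem fun h : (u, y) ∈ T => hy h.2]
      rw [this, integral_indicator measurableSet_Icc, indicator_of_mem hu,
        intervalIntegral.integral_of_le hu.1, integral_Icc_eq_integral_Ioc]
    · simp only [indicator_of_notMem hu, indicator_of_notMem fun h : (u, _) ∈ T => hu h.1,
        integral_zero]
  rw [← integral_indicator hT, Measure.volume_eq_prod,
    integral_prod _ (by rwa [← Measure.volume_eq_prod, integrable_indicator_iff hT])]
  simp_rw [fiber]
  rw [integral_indicator measurableSet_Icc, intervalIntegral.integral_of_le zero_le_one,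
    integral_Icc_eq_integral_Ioc]

theorem integrableOn_rpow_fst_mul {r : ℝ} (hr : -1 < r) {k : ℝ × ℝ → ℝ}
    (hk : ContinuousOn k (Icc 0 1 ×ˢ Icc 0 1)) :
    IntegrableOn (fun p => p.1 ^ r * k p) (Icc 0 1 ×ˢ Icc 0 1) := by
  have hrpow : IntegrableOn (fun u : ℝ => u ^ r) (Icc 0 1) := by
    rw [integrableOn_Icc_iff_integrableOn_Ioc,
      ← intervalIntegrable_iff_integrableOn_Ioc_of_le zero_le_one]
    exact intervalIntegral.intervalIntegrable_rpow' hr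
  have hfst : IntegrableOn (fun p : ℝ × ℝ => p.1 ^ r) (Icc 0 1 ×ˢ Icc 0 1) := by
    rw [IntegrableOn, Measure.volume_eq_prod, ← Measure.prod_restrict]
    exact hrpow.comp_fst _
  exact hfst.mul_continuousOn hk (isCompact_Icc.prod isCompact_Icc)

theorem setIntegral_triangle_rpow_add_mul_mul {r : ℝ} (hr : -1 < r) {f g : ℝ → ℝ}
    (hf : Continuous f) (hg : Continuous g) :
    ∫ p in {p : ℝ × ℝ | 0 ≤ p.1 ∧ 0 ≤ p.2 ∧ p.1 + p.2 ≤ 1}, (p.1 + p.2) ^ r * f p.1 * g p.2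
      = ∫ u in (0:ℝ)..1, u ^ r * ∫ y in (0:ℝ)..u, f (u - y) * g y := by
  have hint : IntegrableOn (fun p : ℝ × ℝ => p.1 ^ r * (f (p.1 - p.2) * g p.2))
      {p : ℝ × ℝ | p.1 ∈ Icc 0 1 ∧ p.2 ∈ Icc 0 p.1} :=
    (integrableOn_rpow_fst_mul hr (by fun_prop)).mono_set
      fun p ⟨hu, hy⟩ => ⟨hu, hy.1, hy.2.trans hu.2⟩
  simp_rw [setIntegral_triangle_eq, sub_add_cancel, mul_assoc,
    setIntegral_triangle_eq_intervalIntegral hint, intervalIntegral.integral_const_mul]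

theorem setIntegral_triangle_rpow_add_mul_cos_mul_cos {r a b : ℝ} (hr : -1 < r)
    (hsum : b + a ≠ 0) (hdiff : b - a ≠ 0) :
    ∫ p in {p : ℝ × ℝ | 0 ≤ p.1 ∧ 0 ≤ p.2 ∧ p.1 + p.2 ≤ 1},
        (p.1 + p.2) ^ r * cos (a * p.1) * cos (b * p.2)
      = (1/2) * (1 / (b + a) * (∫ u in (0:ℝ)..1, u ^ r * (sin (b * u) + sin (a * u)))
          + 1 / (b - a) * (∫ u in (0:ℝ)..1, u ^ r * (sin (b * u) - sin (a * u)))) := by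
  have hrpow := intervalIntegral.intervalIntegrable_rpow' (a := 0) (b := 1) hr
  rw [setIntegral_triangle_rpow_add_mul_mul hr (f := fun x => cos (a * x))
    (g := fun y => cos (b * y)) (by fun_prop) (by fun_prop)]
  simp_rw [integral_cos_mul_sub_mul_cos hsum hdiff]
  rw [← intervalIntegral.integral_const_mul, ← intervalIntegral.integral_const_mul,
    ← intervalIntegral.integral_add, ← intervalIntegral.integral_const_mul]
  · congr 1
    ext u
    ring
  · exact (hrpow.mul_continuousOn (by fun_prop)).const_mul _
  · exact (hrpow.mul_continuousOn (by fun_prop)).const_mul _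

theorem stmt_10 (H : ℝ) (hH : H ∈ Set.Ioo (1/2 : ℝ) 1) (n m : ℕ) (hnm : n ≠ m) :
    (∫ p in {p : ℝ × ℝ | 0 ≤ p.1 ∧ 0 ≤ p.2 ∧ p.1 + p.2 ≤ 1},
        (p.1 + p.2) ^ (2 * H - 2) * Real.cos (((n : ℝ) + 1/2) * Real.pi * p.1) *
          Real.cos (((m : ℝ) + 1/2) * Real.pi * p.2))
      = (1/2) * ((1 / ((((m : ℝ) + 1/2) * Real.pi) + (((n : ℝ) + 1/2) * Real.pi))) *
          (∫ u in (0:ℝ)..1, u ^ (2 * H - 2) *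
            (Real.sin (((m : ℝ) + 1/2) * Real.pi * u) + Real.sin (((n : ℝ) + 1/2) * Real.pi * u)))
        + (1 / ((((m : ℝ) + 1/2) * Real.pi) - (((n : ℝ) + 1/2) * Real.pi))) *
          (∫ u in (0:ℝ)..1, u ^ (2 * H - 2) *
            (Real.sin (((m : ℝ) + 1/2) * Real.pi * u) - Real.sin (((n : ℝ) + 1/2) * Real.pi * u)))) := by
  have hdiff : ((m : ℝ) + 1/2) * π - ((n : ℝ) + 1/2) * π ≠ 0 := by
    rw [← sub_mul, add_sub_add_right_eq_sub]
    exact mul_ne_zero (sub_ne_zero.2 (Nat.cast_injective.ne hnm.symm)) pi_ne_zero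
  exact setIntegral_triangle_rpow_add_mul_cos_mul_cos (r := 2 * H - 2) (by linarith [hH.1])
    (by positivity) hdiff
end

section
/- If K₁ and K₂ are compact self-adjoint operators on a Hilbert space, then for every n, λ_n(K₁+K₂) ≤ min over j ∈ {1,…,n} of (|λ_{n−j+1}(K₁)| + |λ_j(K₂)|). -/
/-- `μ` enumerates the eigenvalues (with multiplicity, in order of decreasing absolute
value) of the operator `A` on a real Hilbert space. -/
def IsEigenvalueSequence {E : Type*} [NormedAddCommGroup E] [InnerProductSpace ℝ E]
    (A : E →L[ℝ] E) (μ : ℕ → ℝ) : Prop :=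
  ∃ e : ℕ → E, Orthonormal ℝ e ∧ (∀ n, A (e n) = μ n • e n) ∧
    (∀ x : E, (∀ n, @inner ℝ _ _ (e n) x = 0) → A x = 0) ∧
    Antitone fun n => |μ n|

/-!
Suppose `a₁ + a₂ < μ n` with `a₁ = |μ₁ (n - j)|` and `a₂ = |μ₂ j|`. The first `n + 1` eigenvectors
of `K₁ + K₂` span an `(n + 1)`-dimensional space, which therefore contains some `x ≠ 0` orthogonal
to the first `n - j` eigenvectors of `K₁` and the first `j` eigenvectors of `K₂`. On that span
`(a₁ + a₂) ‖x‖ < ‖(K₁ + K₂) x‖`, while the orthogonality gives `‖K₁ x‖ ≤ a₁ ‖x‖` and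
`‖K₂ x‖ ≤ a₂ ‖x‖` (Parseval in a Hilbert basis extending the eigenvectors, on which a
self-adjoint `Kᵢ` acts diagonally), contradicting the triangle inequality.
-/

open scoped RealInnerProductSpace

section

variable {E : Type*} [NormedAddCommGroup E] [InnerProductSpace ℝ E]

theorem HilbertBasis.norm_le_of_abs_inner_le {ι : Type*} (b : HilbertBasis ι ℝ E) {x y : E}
    {c : ℝ} (hc : 0 ≤ c) (h : ∀ i, |⟪b i, y⟫| ≤ c * |⟪b i, x⟫|) : ‖y‖ ≤ c * ‖x‖ := by
  have hy := b.hasSum_inner_mul_inner y y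
  have hx := (b.hasSum_inner_mul_inner x x).mul_left (c ^ 2)
  rw [real_inner_self_eq_norm_sq] at hx hy
  refine le_of_pow_le_pow_left₀ two_ne_zero (by positivity) ?_
  rw [mul_pow]
  refine hasSum_le (fun i => ?_) hy hx
  rw [real_inner_comm (b i) y, real_inner_comm (b i) x, ← sq, ← sq, ← sq_abs, ← sq_abs ⟪b i, x⟫,
    ← mul_pow]
  exact pow_le_pow_left₀ (abs_nonneg _) (h i) 2

theorem Orthonormal.norm_sum_smul_sq {ι : Type*} [Fintype ι] {v : ι → E} (hv : Orthonormal ℝ v)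
    (c : ι → ℝ) : ‖∑ i, c i • v i‖ ^ 2 = ∑ i, c i ^ 2 := by
  rw [← real_inner_self_eq_norm_sq, hv.inner_sum]
  simp [sq]

theorem exists_mem_ne_zero_forall_inner_eq_zero {ι : Type*} [Fintype ι] (W : Submodule ℝ E)
    [FiniteDimensional ℝ W] (f : ι → E) (hW : Fintype.card ι < Module.finrank ℝ W) :
    ∃ x ∈ W, x ≠ 0 ∧ ∀ i, ⟪f i, x⟫ = 0 := by
  let L : W →ₗ[ℝ] ι → ℝ := LinearMap.pi fun i => (innerₛₗ ℝ (f i)).comp W.subtype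
  have hL : ¬ Function.Injective L := fun hinj => by
    have := LinearMap.finrank_le_finrank_of_injective hinj
    rw [Module.finrank_fintype_fun_eq_card] at this
    omega
  obtain ⟨x, hx, hx0⟩ := (Submodule.ne_bot_iff _).mp (mt LinearMap.ker_eq_bot.mp hL)
  exact ⟨x, x.2, by simpa using hx0, fun i => congrFun hx i⟩

theorem lt_norm_apply_of_mem_span {ι : Type*} [Fintype ι] {A : E →L[ℝ] E} {e : ι → E}
    {μ : ι → ℝ} (he : Orthonormal ℝ e) (heig : ∀ i, A (e i) = μ i • e i) {a : ℝ} (ha : 0 ≤ a)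
    (hμ : ∀ i, a < |μ i|) {x : E} (hx : x ∈ Submodule.span ℝ (Set.range e)) (hx0 : x ≠ 0) :
    a * ‖x‖ < ‖A x‖ := by
  obtain ⟨c, rfl⟩ := Submodule.mem_span_range_iff_exists_fun ℝ |>.mp hx
  obtain ⟨i₀, hi₀⟩ : ∃ i, c i ≠ 0 := by
    by_contra! hc
    simp [hc] at hx0
  have hAx : A (∑ i, c i • e i) = ∑ i, (c i * μ i) • e i := by
    simp only [map_sum, map_smul, heig, smul_smul]
  have hsq (i : ι) : a ^ 2 < μ i ^ 2 := by
    simpa using pow_lt_pow_left₀ (hμ i) ha two_ne_zero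
  refine lt_of_pow_lt_pow_left₀ 2 (norm_nonneg _) ?_
  rw [hAx, mul_pow, he.norm_sum_smul_sq, he.norm_sum_smul_sq, Finset.mul_sum]
  refine Finset.sum_lt_sum (fun i _ => ?_) ⟨i₀, Finset.mem_univ _, ?_⟩
  · rw [mul_pow, mul_comm (c i ^ 2)]
    exact mul_le_mul_of_nonneg_right (hsq i).le (sq_nonneg _)
  · rw [mul_pow, mul_comm (c i₀ ^ 2)]
    exact mul_lt_mul_of_pos_right (hsq i₀) (sq_pos_iff.mpr hi₀)

theorem norm_apply_le_of_inner_eq_zero [CompleteSpace E] {A : E →L[ℝ] E} (hA : IsSelfAdjoint A)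
    {e : ℕ → E} {μ : ℕ → ℝ} (he : Orthonormal ℝ e) (heig : ∀ n, A (e n) = μ n • e n)
    (hker : ∀ x, (∀ n, ⟪e n, x⟫ = 0) → A x = 0) (hμ : Antitone fun n => |μ n|) {m : ℕ}
    {x : E} (hx : ∀ k < m, ⟪e k, x⟫ = 0) : ‖A x‖ ≤ |μ m| * ‖x‖ := by
  obtain ⟨w, b, hew, hb⟩ := he.toSubtypeRange.exists_hilbertBasis_extension
  refine b.norm_le_of_abs_inner_le (abs_nonneg _) fun u => ?_
  rw [← show ⟪A (b u), x⟫ = ⟪b u, A x⟫ from hA.isSymmetric (b u) x]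
  by_cases hu : (u : E) ∈ Set.range e
  · obtain ⟨k, hk⟩ := hu
    rw [hb, ← hk]
    simp only [heig, real_inner_smul_left, abs_mul]
    rcases lt_or_ge k m with hkm | hkm
    · simp [hx k hkm]
    · exact mul_le_mul_of_nonneg_right (hμ hkm) (abs_nonneg _)
  · have hAu : A (b u) = 0 := hker _ fun n => by
      have hne : (⟨e n, hew ⟨n, rfl⟩⟩ : w) ≠ u := fun h => hu ⟨n, congrArg Subtype.val h⟩
      simpa [hb] using b.orthonormal.2 hne
    rw [hAu, inner_zero_left, abs_zero]
    positivity

end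

theorem stmt_14_general {E : Type*} [NormedAddCommGroup E] [InnerProductSpace ℝ E] [CompleteSpace E]
    (K₁ K₂ : E →L[ℝ] E)
    (h₁sa : IsSelfAdjoint K₁) (h₂sa : IsSelfAdjoint K₂)
    (μ μ₁ μ₂ : ℕ → ℝ)
    (hμ : IsEigenvalueSequence (K₁ + K₂) μ)
    (hμ₁ : IsEigenvalueSequence K₁ μ₁)
    (hμ₂ : IsEigenvalueSequence K₂ μ₂) :
    ∀ n : ℕ, ∀ j ≤ n, μ n ≤ |μ₁ (n - j)| + |μ₂ j| := by
  obtain ⟨e, he, heig, -, hanti⟩ := hμ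
  obtain ⟨e₁, he₁, heig₁, hker₁, hanti₁⟩ := hμ₁
  obtain ⟨e₂, he₂, heig₂, hker₂, hanti₂⟩ := hμ₂
  intro n j hj
  by_contra! hlt
  have heW : Orthonormal ℝ fun k : Fin (n + 1) => e k := he.comp _ Fin.val_injective
  let W := Submodule.span ℝ (Set.range fun k : Fin (n + 1) => e k)
  have : FiniteDimensional ℝ W := FiniteDimensional.span_of_finite ℝ (Set.finite_range _)
  have hW : Module.finrank ℝ W = n + 1 := by
    simp [W, finrank_span_eq_card heW.linearIndependent]
  obtain ⟨x, hxW, hx0, hx⟩ := exists_mem_ne_zero_forall_inner_eq_zero W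
    (Sum.elim (fun k : Fin (n - j) => e₁ k) (fun k : Fin j => e₂ k)) (by simp [hW]; omega)
  have hlower : (|μ₁ (n - j)| + |μ₂ j|) * ‖x‖ < ‖K₁ x + K₂ x‖ :=
    lt_norm_apply_of_mem_span heW (fun k => heig k) (by positivity)
      (fun k => hlt.trans_le ((le_abs_self _).trans (hanti (Fin.is_le k)))) hxW hx0
  have hupper₁ : ‖K₁ x‖ ≤ |μ₁ (n - j)| * ‖x‖ :=
    norm_apply_le_of_inner_eq_zero h₁sa he₁ heig₁ hker₁ hanti₁ fun k hk => hx (.inl ⟨k, hk⟩)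
  have hupper₂ : ‖K₂ x‖ ≤ |μ₂ j| * ‖x‖ :=
    norm_apply_le_of_inner_eq_zero h₂sa he₂ heig₂ hker₂ hanti₂ fun k hk => hx (.inr ⟨k, hk⟩)
  linarith [norm_add_le (K₁ x) (K₂ x)]

theorem stmt_14 {E : Type*} [NormedAddCommGroup E] [InnerProductSpace ℝ E] [CompleteSpace E]
    (K₁ K₂ : E →L[ℝ] E) (h₁ : IsCompactOperator K₁) (h₂ : IsCompactOperator K₂)
    (h₁sa : IsSelfAdjoint K₁) (h₂sa : IsSelfAdjoint K₂)
    (μ μ₁ μ₂ : ℕ → ℝ)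
    (hμ : IsEigenvalueSequence (K₁ + K₂) μ)
    (hμ₁ : IsEigenvalueSequence K₁ μ₁)
    (hμ₂ : IsEigenvalueSequence K₂ μ₂) :
    ∀ n : ℕ, ∀ j ≤ n, μ n ≤ |μ₁ (n - j)| + |μ₂ j| :=
  stmt_14_general K₁ K₂ h₁sa h₂sa μ μ₁ μ₂ hμ hμ₁ hμ₂
end
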